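/- arXiv:2004.14622 — 5 statements merged into one kernel-verified Lean document; each statement's English description precedes it below -/
import Mathlib

section
/- Fix n ≥ 1 and d = (d_0,…,d_n) ∈ (ℕ_{>0})^{n+1}, set Δ = {x ∈ (ℝ_{≥0})^n : |x| ≤ |d|} where |x| = Σ x_i and |d| = Σ d_i. Let δ = (δ_1,…,δ_n) ∈ ℝⁿ satisfy δ_i + 1 > 0 for all i and Σ_{i=1}^n (δ_i + 1) < 1. Then the set of lattice points (Δ + δ) ∩ ℤⁿ equals {b ∈ ℕⁿ : |b| ≤ |d| − n}. -/
/-- The embedding `ℤⁿ → ℝⁿ`. -/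
def castZ {n : ℕ} (a : Fin n → ℤ) : Fin n → ℝ := fun j => (a j : ℝ)

/-- For `d = (d_0,…,d_n)` positive, `Δ = {x ∈ ℝⁿ_{≥0} : |x| ≤ |d|}` and `δ` with
`δ_i + 1 > 0` and `Σ (δ_i + 1) < 1`, the lattice points of `Δ + δ` are exactly the
`b ∈ ℕⁿ` with `|b| ≤ |d| − n`. -/
theorem stmt8 (n : ℕ) (hn : 1 ≤ n) (d : Fin (n + 1) → ℕ) (hd : ∀ i, 0 < d i)
    (δ : Fin n → ℝ) (hδ : ∀ i, 0 < δ i + 1) (hδs : ∑ i, (δ i + 1) < 1) :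
    {b : Fin n → ℤ | castZ b ∈ (fun x => x + δ) ''
        {x : Fin n → ℝ | (∀ i, 0 ≤ x i) ∧ ∑ i, x i ≤ ∑ i, (d i : ℝ)}}
    = {b : Fin n → ℤ | (∀ i, 0 ≤ b i) ∧ ∑ i, b i ≤ (∑ i, (d i : ℤ)) - n} := by
  have hδsum : ∑ i, δ i = ∑ i, (δ i + 1) - n := by
    rw [Finset.sum_add_distrib]; simp
  have hδneg : ∀ i, δ i < 0 := by
    intro i
    have h1 : δ i + 1 ≤ ∑ j, (δ j + 1) :=
      Finset.single_le_sum (fun j _ => le_of_lt (hδ j)) (Finset.mem_univ i)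
    linarith
  have hδpos : (0:ℝ) ≤ ∑ i, (δ i + 1) :=
    Finset.sum_nonneg (fun j _ => le_of_lt (hδ j))
  ext b
  simp only [Set.mem_setOf_eq, Set.mem_image]
  constructor
  · rintro ⟨x, ⟨hx0, hxs⟩, hxe⟩
    have hx : ∀ i, x i = (b i : ℝ) - δ i := by
      intro i
      have h := congrFun hxe i
      simp only [castZ, Pi.add_apply] at h
      linarith
    have hb0 : ∀ i, 0 ≤ b i := by
      intro i
      have h1 := hx0 i
      rw [hx i] at h1
      have h2 := hδ i
      have h3 : (-1 : ℝ) < (b i : ℝ) := by linarith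
      have h4 : (-1 : ℤ) < b i := by exact_mod_cast h3
      omega
    refine ⟨hb0, ?_⟩
    have hsum : ∑ i, x i = ∑ i, (b i : ℝ) - ∑ i, δ i := by
      rw [← Finset.sum_sub_distrib]
      exact Finset.sum_congr rfl (fun i _ => hx i)
    rw [hsum] at hxs
    have key : ((∑ i, b i : ℤ) : ℝ) < (((∑ i, (d i : ℤ)) - n + 1 : ℤ) : ℝ) := by
      push_cast
      linarith
    have key2 : (∑ i, b i) < (∑ i, (d i : ℤ)) - n + 1 := by exact_mod_cast key
    omega
  · rintro ⟨hb0, hbs⟩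
    refine ⟨fun i => (b i : ℝ) - δ i, ⟨?_, ?_⟩, ?_⟩
    · intro i
      have h1 : (0:ℝ) ≤ (b i : ℝ) := by exact_mod_cast hb0 i
      have := hδneg i
      show (0:ℝ) ≤ (b i : ℝ) - δ i
      linarith
    · have hbsR : ((∑ i, b i : ℤ) : ℝ) ≤ (((∑ i, (d i : ℤ)) - n : ℤ) : ℝ) := by
        exact_mod_cast hbs
      push_cast at hbsR
      show ∑ i, ((b i : ℝ) - δ i) ≤ _
      rw [Finset.sum_sub_distrib]
      push_cast
      linarith
    · funext i
      simp only [castZ, Pi.add_apply]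
      ring
end

section
/- Fix d = (d_0,…,d_n) ∈ (ℕ_{>0})^{n+1} and let Δ̂ = {z ∈ (ℝ_{≥0})^{n+1} : |z| = |d|}. For I ⊆ {0,…,n} with I and its complement I^c both nonempty, let Ĉ_I = {z ∈ Δ̂ : z_i ≥ d_i for i ∈ I, z_i ≤ d_i for i ∈ I^c}. Then Ĉ_I has dimension n, and the vertices of the polytope Ĉ_I are exactly the points v̂_{J,l} = (Σ_{j∈J} d_j)·ê_l + Σ_{j∈J^c} d_j·ê_j for subsets J ⊆ I^c and indices l ∈ I, where ê_0,…,ê_n is the standard basis of ℝ^{n+1} and J^c = {0,…,n} \ J. -/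
noncomputable section

/-- The dimension of a subset of a real vector space: the dimension of its affine span. -/
def dimAff {V : Type*} [AddCommGroup V] [Module ℝ V] (S : Set V) : ℕ :=
  Module.finrank ℝ (affineSpan ℝ S).direction

/-- The cell `Ĉ_I ⊆ Δ̂ = {z ∈ ℝ^{n+1}_{≥0} : |z| = |d|}`. -/
def Chat {n : ℕ} (d : Fin (n + 1) → ℕ) (I : Finset (Fin (n + 1))) :
    Set (Fin (n + 1) → ℝ) :=
  {z | (∀ i, 0 ≤ z i) ∧ (∑ i, z i) = (∑ i, (d i : ℝ)) ∧
    (∀ i ∈ I, (d i : ℝ) ≤ z i) ∧ (∀ i ∈ Iᶜ, z i ≤ (d i : ℝ))}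

/-- The point `v̂_{J,l} = (Σ_{j∈J} d_j)·ê_l + Σ_{j∈J^c} d_j·ê_j`. -/
def vhat {n : ℕ} (d : Fin (n + 1) → ℕ) (J : Finset (Fin (n + 1))) (l : Fin (n + 1)) :
    Fin (n + 1) → ℝ :=
  fun k => (if k ∈ J then 0 else (d k : ℝ)) + (if k = l then ∑ j ∈ J, (d j : ℝ) else 0)

/-!
`Ĉ_I` is the slice of the box `∏_{i ∈ I} [d_i, ∞) × ∏_{i ∉ I} [0, d_i]` by the hyperplane
`|z| = |d|`. At an extreme point of such a slice at most one coordinate lies in the interior of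
its interval, since two such coordinates could be moved by `±t` in opposite directions.
Conversely, a point of the slice all of whose coordinates but one are endpoints is extreme, the
remaining coordinate being determined by the sum. For `Ĉ_I` the free coordinate `l` may be taken
in `I`; the other coordinates are then `d_i` on `I` and `0` or `d_i` on `I^c`, which is `v̂_{J,l}`
for `J` the set of vanishing coordinates.

The affine span of `Ĉ_I` lies in `|z| = |d|` and contains `d` and `d + d_j (ê_i - ê_j)` for
`i ∈ I`, `j ∉ I`; as `d_j > 0`, these differences span the whole hyperplane `|v| = 0`.
-/

open Set

section CoordSum

variable (R ι : Type*) [CommRing R] [Fintype ι]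

def coordSum : (ι → R) →ₗ[R] R := ∑ i, LinearMap.proj i

variable {R ι}

@[simp]
lemma coordSum_apply (z : ι → R) : coordSum R ι z = ∑ i, z i := by
  simp [coordSum]

lemma ker_coordSum_le_of_single_sub_single_mem [DecidableEq ι] {W : Submodule R (ι → R)}
    {I : Finset ι} (hI : I.Nonempty) (hIc : Iᶜ.Nonempty)
    (hW : ∀ i ∈ I, ∀ j ∈ Iᶜ, Pi.single i 1 - Pi.single j 1 ∈ W) :
    LinearMap.ker (coordSum R ι) ≤ W := by
  obtain ⟨l, hl⟩ := hI
  obtain ⟨j₀, hj₀⟩ := hIc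
  have hbasis : ∀ i, Pi.single i 1 - Pi.single j₀ 1 ∈ W := by
    intro i
    by_cases hi : i ∈ I
    · exact hW i hi j₀ hj₀
    · simpa using W.sub_mem (hW l hl j₀ hj₀) (hW l hl i (Finset.mem_compl.2 hi))
  intro v hv
  have hrepr : v = ∑ i, v i • (Pi.single i 1 - Pi.single j₀ 1) := by
    rw [LinearMap.mem_ker, coordSum_apply] at hv
    simpa [smul_sub, Finset.sum_sub_distrib, ← Finset.sum_smul, hv] using pi_eq_sum_univ' v
  rw [hrepr]
  exact W.sum_mem fun i _ => W.smul_mem _ (hbasis i)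

lemma finrank_ker_coordSum_add_one (K : Type*) [Field K] [Nonempty ι] :
    Module.finrank K (LinearMap.ker (coordSum K ι)) + 1 = Fintype.card ι := by
  classical
  have hne : coordSum K ι ≠ 0 := fun h => by
    simpa using LinearMap.congr_fun h (Pi.single (Classical.arbitrary ι) 1)
  rw [Module.Dual.finrank_ker_add_one_of_ne_zero hne, Module.finrank_fintype_fun_eq_card]

end CoordSum

section OneFreeCoordinate

variable {ι M : Type*} [Fintype ι] [DecidableEq ι]

lemma eq_of_sum_eq_of_forall_ne [AddCommGroup M] {x y : ι → M} (l : ι)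
    (hsum : ∑ i, x i = ∑ i, y i) (hne : ∀ k ≠ l, x k = y k) : x = y := by
  have hrest : ∑ i ∈ {l}ᶜ, x i = ∑ i ∈ {l}ᶜ, y i :=
    Finset.sum_congr rfl fun k hk => hne k (by simpa using hk)
  funext k
  by_cases hk : k = l
  · subst hk
    rw [Fintype.sum_eq_add_sum_compl k, Fintype.sum_eq_add_sum_compl k y, hrest] at hsum
    exact add_right_cancel hsum
  · exact hne k hk

lemma le_of_sum_eq_of_forall_ne_le [AddCommGroup M] [PartialOrder M] [IsOrderedAddMonoid M]
    {x y : ι → M} (l : ι) (hsum : ∑ i, x i = ∑ i, y i) (hne : ∀ k ≠ l, x k ≤ y k) :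
    y l ≤ x l := by
  have hrest : ∑ i ∈ {l}ᶜ, x i ≤ ∑ i ∈ {l}ᶜ, y i :=
    Finset.sum_le_sum fun k hk => hne k (by simpa using hk)
  rw [Fintype.sum_eq_add_sum_compl l, Fintype.sum_eq_add_sum_compl l y] at hsum
  exact le_of_add_le_add_right (hsum.symm.le.trans (by gcongr))

end OneFreeCoordinate

lemma Set.extremePoints_Ici (c : ℝ) : extremePoints ℝ (Ici c) = {c} := by
  rw [(strictConvex_Ici c).extremePoints_eq_sdiff_interior, interior_Ici, Ici_sdiff_Ioi, Icc_self]

def boxSlice {ι : Type*} [Fintype ι] (B : ι → Set ℝ) (s : ℝ) : Set (ι → ℝ) :=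
  {z | ∑ i, z i = s} ∩ univ.pi B

namespace boxSlice

variable {ι : Type*} [Fintype ι] {B : ι → Set ℝ} {s : ℝ} {z : ι → ℝ}

lemma direction_affineSpan_le :
    (affineSpan ℝ (boxSlice B s)).direction ≤ LinearMap.ker (coordSum ℝ ι) := by
  rw [direction_affineSpan, vectorSpan_def, Submodule.span_le]
  rintro _ ⟨x, hx, y, hy, rfl⟩
  simp [Finset.sum_sub_distrib, hx.1.out, hy.1.out]

lemma subsingleton_interior_coords (hz : z ∈ extremePoints ℝ (boxSlice B s)) :
    {k | z k ∈ interior (B k)}.Subsingleton := by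
  classical
  intro p hp q hq
  by_contra hpq
  obtain ⟨εp, hεp, hballp⟩ := Metric.mem_nhds_iff.1 (mem_interior_iff_mem_nhds.1 hp)
  obtain ⟨εq, hεq, hballq⟩ := Metric.mem_nhds_iff.1 (mem_interior_iff_mem_nhds.1 hq)
  set t := min εp εq / 2
  have ht : 0 < t := by positivity
  have hmem : ∀ u, |u| ≤ t → z + (Pi.single p u - Pi.single q u) ∈ boxSlice B s := by
    intro u hu
    have hup : |u| < εp := hu.trans_lt (by grind)
    have huq : |u| < εq := hu.trans_lt (by grind)
    refine ⟨by simpa [Finset.sum_add_distrib, Finset.sum_sub_distrib] using hz.1.1, ?_⟩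
    intro k _
    by_cases hkp : k = p
    · subst hkp
      simpa [Pi.single_apply, hpq] using hballp (by simpa [Real.dist_eq] using hup)
    · by_cases hkq : k = q
      · subst hkq
        simpa [Pi.single_apply, hkp, sub_eq_add_neg] using
          hballq (by simpa [Real.dist_eq] using huq)
      · simpa [Pi.single_apply, hkp, hkq] using hz.1.2 k (mem_univ k)
  set v : ι → ℝ := Pi.single p t - Pi.single q t
  have hminus : z - v ∈ boxSlice B s := by
    have hneg : z - v = z + (Pi.single p (-t) - Pi.single q (-t)) := by
      simp only [v, Pi.single_neg]
      abel
    exact hneg ▸ hmem (-t) (by simp [abs_of_pos ht])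
  have hv : v = 0 := by
    simpa using hz.2 hminus (hmem t (by simp [abs_of_pos ht])) (mem_openSegment_sub_add z v)
  simpa [v, hpq, ht.ne'] using congr_fun hv p

lemma mem_extremePoints_of_forall_ne [DecidableEq ι] (hz : z ∈ boxSlice B s) (l : ι)
    (hl : ∀ k ≠ l, z k ∈ extremePoints ℝ (B k)) : z ∈ extremePoints ℝ (boxSlice B s) := by
  refine ⟨hz, fun x hx y hy hxy => eq_of_sum_eq_of_forall_ne l (hx.1.out.trans hz.1.out.symm) ?_⟩
  intro k hk
  exact (hl k hk).2 (hx.2 k (mem_univ k)) (hy.2 k (mem_univ k))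
    (Pi.openSegment_subset (s := univ) x y hxy k (mem_univ k))

theorem mem_extremePoints_iff [DecidableEq ι] [Nonempty ι] (hB : ∀ k, StrictConvex ℝ (B k)) :
    z ∈ extremePoints ℝ (boxSlice B s) ↔
      z ∈ boxSlice B s ∧ ∃ l, ∀ k ≠ l, z k ∈ extremePoints ℝ (B k) := by
  refine ⟨fun hz => ⟨hz.1, ?_⟩, fun ⟨hz, l, hl⟩ => mem_extremePoints_of_forall_ne hz l hl⟩
  obtain ⟨l, hl⟩ : ∃ l, ∀ k ≠ l, z k ∉ interior (B k) := by
    by_cases h : ∃ l, z l ∈ interior (B l)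
    · obtain ⟨l, hl⟩ := h
      exact ⟨l, fun k hk hki => hk (subsingleton_interior_coords hz hki hl)⟩
    · exact ⟨Classical.arbitrary ι, fun k _ => not_exists.1 h k⟩
  exact ⟨l, fun k hk =>
    (hB k).sdiff_interior_subset_extremePoints ⟨hz.1.2 k (mem_univ k), hl k hk⟩⟩

end boxSlice

namespace Chat

variable {n : ℕ} (d : Fin (n + 1) → ℕ) (I : Finset (Fin (n + 1)))

def bounds (k : Fin (n + 1)) : Set ℝ :=
  if k ∈ I then Ici (d k : ℝ) else Icc 0 (d k : ℝ)

lemma eq_boxSlice : Chat d I = boxSlice (bounds d I) (∑ i, (d i : ℝ)) := by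
  ext z
  simp only [Chat, boxSlice, bounds, Finset.mem_compl, mem_inter_iff, mem_univ_pi]
  constructor
  · rintro ⟨h0, hsum, hI, hIc⟩
    refine ⟨hsum, fun k => ?_⟩
    split_ifs with hk
    exacts [hI k hk, ⟨h0 k, hIc k hk⟩]
  · rintro ⟨hsum, hB⟩
    refine ⟨fun k => ?_, hsum, fun k hk => ?_, fun k hk => ?_⟩
    · have := hB k
      split_ifs at this
      exacts [(Nat.cast_nonneg _).trans this.out, this.1]
    · simpa [hk] using hB k
    · exact (by simpa [hk] using hB k : 0 ≤ z k ∧ z k ≤ d k).2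

lemma strictConvex_bounds (k : Fin (n + 1)) : StrictConvex ℝ (bounds d I k) := by
  unfold bounds
  split_ifs
  exacts [strictConvex_Ici _, strictConvex_Icc _ _]

lemma extremePoints_bounds (k : Fin (n + 1)) :
    extremePoints ℝ (bounds d I k) = if k ∈ I then {(d k : ℝ)} else {0, (d k : ℝ)} := by
  unfold bounds
  split_ifs
  exacts [extremePoints_Ici _, extremePoints_Icc (Nat.cast_nonneg _)]

variable {d I}

lemma exists_mem_forall_ne_mem_extremePoints (hI : I.Nonempty) {z : Fin (n + 1) → ℝ}
    (hz : z ∈ extremePoints ℝ (Chat d I)) :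
    ∃ l ∈ I, ∀ k ≠ l, z k ∈ extremePoints ℝ (bounds d I k) := by
  rw [eq_boxSlice, boxSlice.mem_extremePoints_iff (strictConvex_bounds d I)] at hz
  obtain ⟨⟨hsum, hB⟩, l, hl⟩ := hz
  by_cases hlI : l ∈ I
  · exact ⟨l, hlI, hl⟩
  -- otherwise every other coordinate is at most `d k`, so the sum forces `z l = d l` as well
  have hle : ∀ k ≠ l, z k ≤ d k := by
    intro k hk
    have := hl k hk
    rw [extremePoints_bounds] at this
    split_ifs at this <;> grind
  have hzl : z l ∈ extremePoints ℝ (bounds d I l) := by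
    have hl_le : z l ≤ d l := (by simpa [bounds, hlI] using hB l (mem_univ l) : z l ∈ Icc _ _).2
    rw [extremePoints_bounds, if_neg hlI]
    exact Or.inr (hl_le.antisymm (le_of_sum_eq_of_forall_ne_le l hsum hle))
  obtain ⟨l', hl'⟩ := hI
  refine ⟨l', hl', fun k _ => ?_⟩
  by_cases hk : k = l
  exacts [hk ▸ hzl, hl k hk]

end Chat

section vhat

variable {n : ℕ} (d : Fin (n + 1) → ℕ) {I J : Finset (Fin (n + 1))} {k l : Fin (n + 1)}

lemma vhat_apply_of_ne (hk : k ≠ l) : vhat d J l k = if k ∈ J then 0 else (d k : ℝ) := by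
  simp [vhat, hk]

lemma sum_vhat (J : Finset (Fin (n + 1))) (l : Fin (n + 1)) :
    ∑ k, vhat d J l k = ∑ k, (d k : ℝ) := by
  simp only [vhat, Finset.sum_add_distrib, Finset.sum_ite_eq', Finset.mem_univ, if_true,
    Finset.sum_ite, Finset.sum_const_zero, zero_add]
  rw [← Finset.sum_filter_not_add_sum_filter Finset.univ (· ∈ J), Finset.filter_univ_mem]

lemma vhat_apply_mem_extremePoints_bounds (hJ : J ⊆ Iᶜ) (hk : k ≠ l) :
    vhat d J l k ∈ extremePoints ℝ (Chat.bounds d I k) := by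
  rw [vhat_apply_of_ne d hk, Chat.extremePoints_bounds]
  by_cases hkI : k ∈ I
  · have hkJ : k ∉ J := fun h => Finset.mem_compl.1 (hJ h) hkI
    simp [hkI, hkJ]
  · by_cases hkJ : k ∈ J <;> simp [hkI, hkJ]

lemma vhat_mem_Chat (hJ : J ⊆ Iᶜ) (hl : l ∈ I) : vhat d J l ∈ Chat d I := by
  rw [Chat.eq_boxSlice]
  refine ⟨sum_vhat d J l, fun k _ => ?_⟩
  by_cases hk : k = l
  · subst hk
    have hkJ : k ∉ J := fun h => Finset.mem_compl.1 (hJ h) hl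
    simpa [Chat.bounds, hl, vhat, hkJ] using Finset.sum_nonneg fun j _ => Nat.cast_nonneg (d j)
  · exact extremePoints_subset (vhat_apply_mem_extremePoints_bounds d hJ hk)

end vhat

namespace Chat

variable {n : ℕ} {d : Fin (n + 1) → ℕ} {I : Finset (Fin (n + 1))}

theorem extremePoints_eq (hI : I.Nonempty) :
    extremePoints ℝ (Chat d I)
      = {z | ∃ J : Finset (Fin (n + 1)), J ⊆ Iᶜ ∧ ∃ l ∈ I, z = vhat d J l} := by
  ext z
  constructor
  · intro hz
    obtain ⟨l, hl, hext⟩ := exists_mem_forall_ne_mem_extremePoints hI hz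
    refine ⟨Iᶜ.filter (z · = 0), Finset.filter_subset _ _, l, hl, ?_⟩
    refine eq_of_sum_eq_of_forall_ne l ?_ fun k hk => ?_
    · rw [sum_vhat]
      exact (eq_boxSlice d I ▸ hz.1).1
    · have hzk := hext k hk
      rw [extremePoints_bounds] at hzk
      rw [vhat_apply_of_ne d hk]
      by_cases hkI : k ∈ I <;> by_cases hz0 : z k = 0 <;> simp_all
  · rintro ⟨J, hJ, l, hl, rfl⟩
    rw [eq_boxSlice]
    exact boxSlice.mem_extremePoints_of_forall_ne (eq_boxSlice d I ▸ vhat_mem_Chat d hJ hl) l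
      fun k hk => vhat_apply_mem_extremePoints_bounds d hJ hk

lemma single_sub_single_mem_direction (hd : ∀ i, 0 < d i) {i j : Fin (n + 1)} (hi : i ∈ I)
    (hj : j ∈ Iᶜ) : Pi.single i 1 - Pi.single j 1 ∈ (affineSpan ℝ (Chat d I)).direction := by
  have hij : i ≠ j := fun h => Finset.mem_compl.1 hj (h ▸ hi)
  -- `v̂_{{j},i} - v̂_{∅,i} = d_j (ê_i - ê_j)`, and `v̂_{∅,i} = d`
  have hdiff : vhat d {j} i - vhat d ∅ i = (d j : ℝ) • (Pi.single i 1 - Pi.single j 1) := by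
    funext k
    by_cases hki : k = i
    · subst hki
      simp [vhat, hij]
    · by_cases hkj : k = j <;> simp [vhat, hki, hkj, hij.symm]
  have hmem := AffineSubspace.vsub_mem_direction
    (subset_affineSpan ℝ _ (vhat_mem_Chat d (Finset.singleton_subset_iff.2 hj) hi))
    (subset_affineSpan ℝ _ (vhat_mem_Chat d (Finset.empty_subset _) hi))
  rw [vsub_eq_sub, hdiff] at hmem
  exact (Submodule.smul_mem_iff _ (by exact_mod_cast (hd j).ne')).1 hmem

theorem dimAff_eq (hd : ∀ i, 0 < d i) (hI : I.Nonempty) (hIc : Iᶜ.Nonempty) :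
    dimAff (Chat d I) = n := by
  have hle : (affineSpan ℝ (Chat d I)).direction ≤ LinearMap.ker (coordSum ℝ (Fin (n + 1))) :=
    eq_boxSlice d I ▸ boxSlice.direction_affineSpan_le
  have hge := ker_coordSum_le_of_single_sub_single_mem hI hIc fun i hi j hj =>
    single_sub_single_mem_direction hd hi hj
  have hrank := finrank_ker_coordSum_add_one ℝ (ι := Fin (n + 1))
  rw [dimAff, le_antisymm hle hge]
  simpa using hrank

end Chat

/-- For `I ⊆ {0,…,n}` with `I` and `I^c` nonempty, the polytope `Ĉ_I` has dimension `n`,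
and its vertices (extreme points) are exactly the `v̂_{J,l}` for `J ⊆ I^c` and `l ∈ I`. -/
theorem stmt9 (n : ℕ) (d : Fin (n + 1) → ℕ) (hd : ∀ i, 0 < d i)
    (I : Finset (Fin (n + 1))) (hI : I.Nonempty) (hIc : Iᶜ.Nonempty) :
    dimAff (Chat d I) = n ∧
    Set.extremePoints ℝ (Chat d I)
      = {z | ∃ J : Finset (Fin (n + 1)), J ⊆ Iᶜ ∧ ∃ l ∈ I, z = vhat d J l} :=
  ⟨Chat.dimAff_eq hd hI hIc, Chat.extremePoints_eq hI⟩
end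
end

section
/- Fix d = (d_0,…,d_n) ∈ (ℕ_{>0})^{n+1}. For i = 0,…,n let Δ_i = {x ∈ (ℝ_{≥0})^n : |x| ≤ d_i} and let φ_i : Δ_i → ℝ be the affine function φ_0(x) = |x| and φ_i(x) = d_i − x_i for i > 0. Let φ = φ_0 ⊞ ⋯ ⊞ φ_n be the inf-convolution on Δ = Σ_i Δ_i = {x ∈ (ℝ_{≥0})^n : |x| ≤ |d|}. Then for all x ∈ Δ, φ(x) = Σ_{i=0}^{n} max{0, ℓ_i(x)}, where ℓ_0(x) = Σ_{j=1}^n d_j − |x| and ℓ_i(x) = x_i − d_i for i > 0. -/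
noncomputable section

/-- The scaled standard simplex `{x ∈ ℝⁿ_{≥0} : |x| ≤ c}`. -/
def simplexLe {n : ℕ} (c : ℝ) : Set (Fin n → ℝ) := {x | (∀ j, 0 ≤ x j) ∧ ∑ j, x j ≤ c}

/-- The affine functions `φ_0(x) = |x|`, `φ_i(x) = d_i − x_i` for `i > 0`. -/
def phiFn {n : ℕ} (d : Fin (n + 1) → ℕ) (i : Fin (n + 1)) (x : Fin n → ℝ) : ℝ :=
  if h : (i : ℕ) = 0 then ∑ j, x j
  else (d i : ℝ) - x ⟨(i : ℕ) - 1, by have := i.isLt; omega⟩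

/-- The affine functions `ℓ_0(x) = Σ_{j=1}^n d_j − |x|`, `ℓ_i(x) = x_i − d_i` for `i > 0`. -/
def ellFn {n : ℕ} (d : Fin (n + 1) → ℕ) (i : Fin (n + 1)) (x : Fin n → ℝ) : ℝ :=
  if h : (i : ℕ) = 0 then (∑ j : Fin n, (d j.succ : ℝ)) - ∑ j, x j
  else x ⟨(i : ℕ) - 1, by have := i.isLt; omega⟩ - (d i : ℝ)

/-- The inf-convolution of the functions `ψ i` with domains `Λ i`. -/
def infConv {n s : ℕ} (Λ : Fin s → Set (Fin n → ℝ)) (ψ : Fin s → (Fin n → ℝ) → ℝ)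
    (x : Fin n → ℝ) : ℝ :=
  sInf {t | ∃ y : Fin s → Fin n → ℝ,
    (∀ i, y i ∈ Λ i) ∧ (∑ i, y i) = x ∧ (∑ i, ψ i (y i)) = t}

/-!
Write `R = Σ_k (x_k - d_k)⁺` and `C = Σ_k (d_k - x_k)⁺` (indices `k ≥ 1`); then
`Σ_i max{0, ℓ_i(x)} = max{0, C - R} + R = max{R, C}`.

A decomposition `x = y_0 + ⋯ + y_n` has value `|y_0| + Σ_k (d_k - y_k(k))`. As
`y_k(k) ≤ min{d_k, x_k}`, this is at least `|y_0| + C ≥ C`. Since `|y_k| ≤ d_k`, it is also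
`Σ_k (x_k - y_k(k) + d_k - |y_k|) ≥ R`.

The bound `max{R, C}` is attained by putting `min{d_k, x_k}` on the diagonal of `y_k` and
spreading the overflow vector `((x_k - d_k)⁺)_k` proportionally: a share `min{R, C}` of it goes
into the free room `(d_k - x_k)⁺` of the `y_k` (where the overflow vanishes, so the diagonals are
untouched), the remaining `max{0, R - C} ≤ d_0` into `y_0`.
-/

open Finset

variable {n : ℕ} (d : Fin (n + 1) → ℕ)

lemma phiFn_zero (z : Fin n → ℝ) : phiFn d 0 z = ∑ j, z j := by simp [phiFn]

lemma phiFn_succ (k : Fin n) (z : Fin n → ℝ) : phiFn d k.succ z = d k.succ - z k := by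
  simp [phiFn]

lemma ellFn_zero (x : Fin n → ℝ) : ellFn d 0 x = ∑ j : Fin n, (d j.succ : ℝ) - ∑ j, x j := by
  simp [ellFn]

lemma ellFn_succ (k : Fin n) (x : Fin n → ℝ) : ellFn d k.succ x = x k - d k.succ := by
  simp [ellFn]

lemma sum_phiFn (y : Fin (n + 1) → Fin n → ℝ) :
    ∑ i, phiFn d i (y i) = ∑ j, y 0 j + ∑ k, ((d k.succ : ℝ) - y k.succ k) := by
  simp only [Fin.sum_univ_succ, phiFn_zero, phiFn_succ]

section Split

variable (x : Fin n → ℝ)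

def fill (j : Fin n) : ℝ := min (d j.succ : ℝ) (x j)

def excess (j : Fin n) : ℝ := x j - fill d x j

def deficit (j : Fin n) : ℝ := d j.succ - fill d x j

def totalExcess : ℝ := ∑ j, excess d x j

def totalDeficit : ℝ := ∑ j, deficit d x j

lemma excess_nonneg (j : Fin n) : 0 ≤ excess d x j := sub_nonneg.2 (min_le_right _ _)

lemma deficit_nonneg (j : Fin n) : 0 ≤ deficit d x j := sub_nonneg.2 (min_le_left _ _)

lemma totalExcess_nonneg : 0 ≤ totalExcess d x := sum_nonneg fun j _ ↦ excess_nonneg d x j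

lemma totalDeficit_nonneg : 0 ≤ totalDeficit d x := sum_nonneg fun j _ ↦ deficit_nonneg d x j

lemma excess_mul_deficit (j : Fin n) : excess d x j * deficit d x j = 0 := by
  rcases min_choice (d j.succ : ℝ) (x j) with h | h <;> simp [excess, deficit, fill, h]

lemma max_zero_sub_eq_excess (j : Fin n) : max 0 (x j - d j.succ) = excess d x j := by
  rcases le_total (d j.succ : ℝ) (x j) with h | h <;> simp [excess, fill, h]

lemma totalExcess_sub_totalDeficit :
    totalExcess d x - totalDeficit d x = ∑ j, x j - ∑ j : Fin n, (d j.succ : ℝ) := by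
  simp only [totalExcess, totalDeficit, excess, deficit, ← sum_sub_distrib,
    sub_sub_sub_cancel_right]

lemma sum_max_zero_ellFn :
    ∑ i, max 0 (ellFn d i x) = max (totalExcess d x) (totalDeficit d x) := by
  have h0 : ellFn d 0 x = totalDeficit d x - totalExcess d x := by
    rw [ellFn_zero]; linarith [totalExcess_sub_totalDeficit d x]
  simp only [Fin.sum_univ_succ, h0, ellFn_succ, max_zero_sub_eq_excess]
  change max 0 _ + totalExcess d x = _
  rw [← max_add_add_right, zero_add, sub_add_cancel]

def share : Fin (n + 1) → ℝ :=
  Fin.cons (max 0 (totalExcess d x - totalDeficit d x))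
    fun k ↦ min (totalExcess d x) (totalDeficit d x) / totalDeficit d x * deficit d x k

lemma share_zero : share d x 0 = max 0 (totalExcess d x - totalDeficit d x) := rfl

lemma share_succ (k : Fin n) : share d x k.succ =
    min (totalExcess d x) (totalDeficit d x) / totalDeficit d x * deficit d x k := rfl

lemma share_nonneg (i : Fin (n + 1)) : 0 ≤ share d x i := by
  have hD := totalDeficit_nonneg d x
  cases i using Fin.cases with
  | zero => exact le_max_left _ _
  | succ k =>
    exact mul_nonneg (div_nonneg (le_min (totalExcess_nonneg d x) hD) hD) (deficit_nonneg d x k)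

lemma share_succ_le_deficit (k : Fin n) : share d x k.succ ≤ deficit d x k :=
  mul_le_of_le_one_left (deficit_nonneg d x k)
    (div_le_one_of_le₀ (min_le_right _ _) (totalDeficit_nonneg d x))

lemma share_succ_mul_excess (k : Fin n) : share d x k.succ * excess d x k = 0 := by
  rw [share_succ, mul_assoc, mul_comm (deficit d x k), excess_mul_deficit, mul_zero]

lemma share_eq_zero_of_totalExcess_eq_zero (h : totalExcess d x = 0) (i : Fin (n + 1)) :
    share d x i = 0 := by
  have := totalDeficit_nonneg d x
  cases i using Fin.cases with
  | zero => simp [share_zero, h, this]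
  | succ k => simp [share_succ, h, this]

lemma sum_share : ∑ i, share d x i = totalExcess d x := by
  have hE := totalExcess_nonneg d x
  have hmin : min (totalExcess d x) (totalDeficit d x) / totalDeficit d x * totalDeficit d x
      = min (totalExcess d x) (totalDeficit d x) := by
    rcases (totalDeficit_nonneg d x).eq_or_lt with h | h
    · simp [← h, hE]
    · exact div_mul_cancel₀ _ h.ne'
  rw [Fin.sum_univ_succ, share_zero]
  simp only [share_succ, ← mul_sum]
  change _ + _ * totalDeficit d x = _
  rw [hmin]
  rcases le_total (totalExcess d x) (totalDeficit d x) with h | h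
  · simp [h]
  · rw [max_eq_right (sub_nonneg.2 h), min_eq_right h, sub_add_cancel]

-- Without overflow this is `0` (as `0⁻¹ = 0`) rather than a probability vector; then every share
-- vanishes too (`share_eq_zero_of_totalExcess_eq_zero`).
def excessProfile : Fin n → ℝ := (totalExcess d x)⁻¹ • excess d x

lemma totalExcess_smul_excessProfile : totalExcess d x • excessProfile d x = excess d x := by
  rcases (totalExcess_nonneg d x).eq_or_lt with h | h
  · ext j
    have := (sum_eq_zero_iff_of_nonneg fun j _ ↦ excess_nonneg d x j).1 h.symm j (mem_univ j)
    simp [excessProfile, this]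
  · rw [excessProfile, smul_inv_smul₀ h.ne']

lemma share_mul_sum_excessProfile (i : Fin (n + 1)) :
    share d x i * ∑ j, excessProfile d x j = share d x i := by
  by_cases h : totalExcess d x = 0
  · simp [share_eq_zero_of_totalExcess_eq_zero d x h]
  · simp only [excessProfile, Pi.smul_apply, smul_eq_mul, ← mul_sum]
    rw [show ∑ j, excess d x j = totalExcess d x from rfl, inv_mul_cancel₀ h, mul_one]

def optimalSplit (i : Fin (n + 1)) : Fin n → ℝ :=
  share d x i • excessProfile d x +
    (Fin.cons 0 fun k ↦ Pi.single k (fill d x k) : Fin (n + 1) → Fin n → ℝ) i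

lemma optimalSplit_zero : optimalSplit d x 0 = share d x 0 • excessProfile d x := by
  simp [optimalSplit]

lemma optimalSplit_succ (k : Fin n) :
    optimalSplit d x k.succ = share d x k.succ • excessProfile d x + Pi.single k (fill d x k) :=
  rfl

lemma sum_optimalSplit : ∑ i, optimalSplit d x i = x := by
  ext j
  simp only [optimalSplit, sum_add_distrib, ← sum_smul, sum_share, totalExcess_smul_excessProfile,
    Fin.sum_cons, zero_add, univ_sum_single]
  simp [excess]

lemma sum_optimalSplit_zero : ∑ j, optimalSplit d x 0 j = share d x 0 := by
  simp only [optimalSplit_zero, Pi.smul_apply, smul_eq_mul, ← mul_sum,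
    share_mul_sum_excessProfile]

lemma sum_optimalSplit_succ (k : Fin n) :
    ∑ j, optimalSplit d x k.succ j = share d x k.succ + fill d x k := by
  simp only [optimalSplit_succ, Pi.add_apply, Pi.smul_apply, smul_eq_mul, sum_add_distrib,
    ← mul_sum, share_mul_sum_excessProfile, sum_pi_single', if_pos (mem_univ k)]

lemma optimalSplit_succ_self (k : Fin n) : optimalSplit d x k.succ k = fill d x k := by
  have := share_succ_mul_excess d x k
  simp only [optimalSplit_succ, Pi.add_apply, Pi.smul_apply, smul_eq_mul, excessProfile,
    Pi.single_eq_same]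
  linear_combination (totalExcess d x)⁻¹ * this

lemma sum_phiFn_optimalSplit :
    ∑ i, phiFn d i (optimalSplit d x i) = max (totalExcess d x) (totalDeficit d x) := by
  rw [sum_phiFn, sum_optimalSplit_zero, share_zero]
  simp only [optimalSplit_succ_self]
  change max 0 _ + totalDeficit d x = _
  rw [← max_add_add_right, zero_add, sub_add_cancel, max_comm]

variable {x} in
lemma optimalSplit_mem (hx : x ∈ simplexLe (∑ i, (d i : ℝ))) (i : Fin (n + 1)) :
    optimalSplit d x i ∈ simplexLe (d i : ℝ) := by
  have hfill (k : Fin n) : 0 ≤ fill d x k := le_min (Nat.cast_nonneg _) (hx.1 k)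
  have hprofile (j : Fin n) : 0 ≤ excessProfile d x j :=
    mul_nonneg (inv_nonneg.2 (totalExcess_nonneg d x)) (excess_nonneg d x j)
  cases i using Fin.cases with
  | zero =>
    refine ⟨fun j ↦ ?_, ?_⟩
    · rw [optimalSplit_zero]; exact mul_nonneg (share_nonneg d x 0) (hprofile j)
    · have := totalExcess_sub_totalDeficit d x
      have := hx.2.trans_eq (Fin.sum_univ_succ _)
      rw [sum_optimalSplit_zero, share_zero]
      exact max_le (Nat.cast_nonneg _) (by linarith)
  | succ k =>
    refine ⟨fun j ↦ ?_, ?_⟩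
    · have hsingle : 0 ≤ (Pi.single k (fill d x k) : Fin n → ℝ) := by simpa using hfill k
      rw [optimalSplit_succ]
      exact add_nonneg (mul_nonneg (share_nonneg d x _) (hprofile j)) (hsingle j)
    · rw [sum_optimalSplit_succ]
      linarith [share_succ_le_deficit d x k, show deficit d x k + fill d x k = d k.succ from
        sub_add_cancel _ _]

end Split

variable {d} in
lemma max_totalExcess_totalDeficit_le_sum_phiFn {x : Fin n → ℝ} {y : Fin (n + 1) → Fin n → ℝ}
    (hy : ∀ i, y i ∈ simplexLe (d i : ℝ)) (hxy : ∑ i, y i = x) :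
    max (totalExcess d x) (totalDeficit d x) ≤ ∑ i, phiFn d i (y i) := by
  have hcoord (j : Fin n) : ∑ i, y i j = x j := by rw [← hxy, Finset.sum_apply]
  have hdiag (k : Fin n) : y k.succ k ≤ fill d x k := by
    refine le_min ((single_le_sum (fun j _ ↦ (hy k.succ).1 j) (mem_univ k)).trans (hy k.succ).2) ?_
    rw [← hcoord k]
    exact single_le_sum (fun i _ ↦ (hy i).1 k) (mem_univ k.succ)
  have htotal : ∑ j, y 0 j + ∑ k : Fin n, ∑ j, y k.succ j = ∑ j, x j := by
    rw [← Fin.sum_univ_succ (f := fun i ↦ ∑ j, y i j), sum_comm]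
    exact sum_congr rfl fun j _ ↦ hcoord j
  rw [sum_phiFn]
  apply max_le
  · calc totalExcess d x
        ≤ ∑ k, (x k - y k.succ k + ((d k.succ : ℝ) - ∑ j, y k.succ j)) :=
          sum_le_sum fun k _ ↦ by
            simp only [excess]; linarith [hdiag k, (hy k.succ).2]
      _ = ∑ j, y 0 j + ∑ k, ((d k.succ : ℝ) - y k.succ k) := by
          simp only [sum_add_distrib, sum_sub_distrib]; linarith
  · have hy0 : 0 ≤ ∑ j, y 0 j := sum_nonneg fun j _ ↦ (hy 0).1 j
    have : totalDeficit d x ≤ ∑ k, ((d k.succ : ℝ) - y k.succ k) :=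
      sum_le_sum fun k _ ↦ by simp only [deficit]; linarith [hdiag k]
    linarith

theorem stmt10_general (n : ℕ) (d : Fin (n + 1) → ℕ) :
    ∀ x ∈ simplexLe (n := n) (∑ i, (d i : ℝ)),
      infConv (fun i => simplexLe ((d i : ℝ))) (phiFn d) x
        = ∑ i, max 0 (ellFn d i x) := by
  intro x hx
  rw [sum_max_zero_ellFn, infConv]
  refine IsLeast.csInf_eq ⟨⟨optimalSplit d x, optimalSplit_mem d hx, sum_optimalSplit d x,
    sum_phiFn_optimalSplit d x⟩, ?_⟩
  rintro t ⟨y, hy, hxy, rfl⟩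
  exact max_totalExcess_totalDeficit_le_sum_phiFn hy hxy

/-- The inf-convolution `φ = φ_0 ⊞ ⋯ ⊞ φ_n` on `Δ = {x ∈ ℝⁿ_{≥0} : |x| ≤ |d|}` satisfies
`φ(x) = Σ_i max{0, ℓ_i(x)}` for all `x ∈ Δ`. -/
theorem stmt10 (n : ℕ) (d : Fin (n + 1) → ℕ) (hd : ∀ i, 0 < d i) :
    ∀ x ∈ simplexLe (n := n) (∑ i, (d i : ℝ)),
      infConv (fun i => simplexLe ((d i : ℝ))) (phiFn d) x
        = ∑ i, max 0 (ellFn d i x) :=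
  stmt10_general n d
end
end

section
/- Let 𝒞_i ⊂ M ≅ ℤⁿ, i = 1,…,s, be nonempty finite sets and for ν ∈ ∏_i ℝ^{𝒞_i} let Θ_ν = ϑ_{ν_1} ⊞ ⋯ ⊞ ϑ_{ν_s} be the inf-convolution of the lower-envelope functions on the Δ_i = conv(𝒞_i). For every ν there is a neighborhood U of ν in ∏_i ℝ^{𝒞_i} such that for all ν̃ ∈ U the mixed subdivision S(Θ_ν̃) refines S(Θ_ν): every cell C̃ of S(Θ_ν̃) is contained in some cell C of S(Θ_ν) and its components satisfy C̃_i ⊆ C_i for all i. -/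
open Pointwise

noncomputable section

/-- The standard pairing on `ℝⁿ`. -/
def dot {n : ℕ} (v x : Fin n → ℝ) : ℝ := ∑ i, v i * x i

/-- The epigraph of a function `ψ` defined on `Λ`. -/
def epigraph {n : ℕ} (Λ : Set (Fin n → ℝ)) (ψ : (Fin n → ℝ) → ℝ) :
    Set ((Fin n → ℝ) × ℝ) :=
  {p | p.1 ∈ Λ ∧ ψ p.1 ≤ p.2}

/-- The support value `h_S(v,1) = inf {⟨v,x⟩ + z : (x,z) ∈ S}`. -/
def suppVal {n : ℕ} (S : Set ((Fin n → ℝ) × ℝ)) (v : Fin n → ℝ) : ℝ :=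
  sInf ((fun p => dot v p.1 + p.2) '' S)

/-- The cell `C(ψ,v)`: the projection to `M_ℝ` of the face of the epigraph of `ψ`
in the direction `(v,1)`. -/
def cell {n : ℕ} (Λ : Set (Fin n → ℝ)) (ψ : (Fin n → ℝ) → ℝ) (v : Fin n → ℝ) :
    Set (Fin n → ℝ) :=
  Prod.fst '' {p | p ∈ epigraph Λ ψ ∧ dot v p.1 + p.2 = suppVal (epigraph Λ ψ) v}

/-- A convex polyhedron: a finite intersection of closed halfspaces. -/
def IsPolyhedron {n : ℕ} (Λ : Set (Fin n → ℝ)) : Prop :=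
  ∃ F : Finset ((Fin n → ℝ) × ℝ), Λ = {x | ∀ p ∈ F, dot p.1 x ≤ p.2}

/-- A convex piecewise affine function on `Λ`: the max of finitely many affine functions. -/
def IsCPA {n : ℕ} (Λ : Set (Fin n → ℝ)) (ψ : (Fin n → ℝ) → ℝ) : Prop :=
  ∃ F : Finset ((Fin n → ℝ) × ℝ), ∃ hF : F.Nonempty,
    ∀ x ∈ Λ, ψ x = F.sup' hF fun p => dot p.1 x + p.2

/-- The `i`-th component of a cell `C` of the mixed subdivision: the image under the `i`-th
projection of the set of decomposition tuples realizing the infimum of the inf-convolution. -/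
def comp {n s : ℕ} (Λ : Fin s → Set (Fin n → ℝ)) (ψ : Fin s → (Fin n → ℝ) → ℝ)
    (C : Set (Fin n → ℝ)) (i : Fin s) : Set (Fin n → ℝ) :=
  (fun y => y i) '' {y : Fin s → Fin n → ℝ |
    (∀ j, y j ∈ Λ j) ∧ (∑ j, y j) ∈ C ∧ infConv Λ ψ (∑ j, y j) = ∑ j, ψ j (y j)}

/-- The convex piecewise affine function `ϑ_ν` parametrizing the lower envelope of the
convex hull of the lifted points `{(a, ν_a) : a ∈ S}`. -/
def lowerEnv {n : ℕ} (S : Finset (Fin n → ℤ)) (ν : {a // a ∈ S} → ℝ)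
    (x : Fin n → ℝ) : ℝ :=
  sInf {t | (x, t) ∈ convexHull ℝ
    (Set.range fun a : {a // a ∈ S} => ((castZ (a : Fin n → ℤ), ν a) : (Fin n → ℝ) × ℝ))}

set_option linter.unusedSectionVars false

section ConeBlock

open Finset

variable {V : Type*} [NormedAddCommGroup V] [NormedSpace ℝ V] [FiniteDimensional ℝ V]

/-- Carathéodory for cones: any nonnegative combination can be rewritten with
linearly independent support. -/
lemma cone_carath {ι : Type*} [Fintype ι] (v : ι → V) :
    ∀ (k : ℕ) (c : ι → ℝ), (univ.filter fun i => c i ≠ 0).card ≤ k → (∀ i, 0 ≤ c i) →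
    ∃ c' : ι → ℝ, (∀ i, 0 ≤ c' i) ∧ (∑ i, c' i • v i = ∑ i, c i • v i) ∧
      LinearIndependent ℝ (fun i : {i // c' i ≠ 0} => v i) := by
  classical
  intro k
  induction k with
  | zero =>
    intro c hcard hc
    refine ⟨c, hc, rfl, ?_⟩
    have hempty : IsEmpty {i // c i ≠ 0} := by
      constructor
      rintro ⟨i, hi⟩
      have : i ∈ univ.filter fun i => c i ≠ 0 := by simp [hi]
      have := card_pos.mpr ⟨i, this⟩
      omega
    exact linearIndependent_empty_type
  | succ k ih =>
    intro c hcard hc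
    by_cases hli : LinearIndependent ℝ (fun i : {i // c i ≠ 0} => v i)
    · exact ⟨c, hc, rfl, hli⟩
    · obtain ⟨g, hgsum, j, hgj⟩ := Fintype.not_linearIndependent_iff.mp hli
      -- extend g to ι by zero
      set d : ι → ℝ := fun i => if h : c i ≠ 0 then g ⟨i, h⟩ else 0 with hd
      have hdsum : ∑ i, d i • v i = 0 := by
        have h1 : ∑ i ∈ (univ.filter fun i => c i ≠ 0), d i • v i = ∑ i, d i • v i := by
          apply Finset.sum_filter_of_ne
          intro i _ hne hci
          apply hne
          simp [hd, hci]
        rw [← h1, Finset.sum_subtype (p := fun i => c i ≠ 0) (univ.filter fun i => c i ≠ 0)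
          (by intro x; simp) (fun i => d i • v i), ← hgsum]
        apply Finset.sum_congr rfl
        rintro ⟨i, hi⟩ _
        simp [hd, hi]
      -- wlog there is an index with positive coefficient
      have key : ∀ d : ι → ℝ, (∑ i, d i • v i = 0) → (∀ i, d i ≠ 0 → c i ≠ 0) →
          (∃ i, 0 < d i) → ∃ c' : ι → ℝ, (∀ i, 0 ≤ c' i) ∧
            (∑ i, c' i • v i = ∑ i, c i • v i) ∧
            LinearIndependent ℝ (fun i : {i // c' i ≠ 0} => v i) := by
        intro d hdsum hsupp ⟨i₁, hi₁⟩
        set I : Finset ι := univ.filter fun i => 0 < d i with hI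
        have hIne : I.Nonempty := ⟨i₁, by simp [hI, hi₁]⟩
        obtain ⟨i₀, hi₀I, hi₀⟩ := Finset.exists_mem_eq_inf' hIne (fun i => c i / d i)
        have hdi₀ : 0 < d i₀ := by simpa [hI] using hi₀I
        set t : ℝ := I.inf' hIne fun i => c i / d i with ht
        have htnn : 0 ≤ t := by
          rw [hi₀]; exact div_nonneg (hc i₀) hdi₀.le
        set c' : ι → ℝ := fun i => c i - t * d i with hc'
        have hc'nn : ∀ i, 0 ≤ c' i := by
          intro i
          by_cases hdi : 0 < d i
          · have : t ≤ c i / d i := Finset.inf'_le _ (by simp [hI, hdi])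
            have := (le_div_iff₀ hdi).mp this
            simp only [hc']; linarith
          · push_neg at hdi
            have : t * d i ≤ 0 := mul_nonpos_of_nonneg_of_nonpos htnn hdi
            have := hc i
            simp only [hc']; linarith
        have hsum : ∑ i, c' i • v i = ∑ i, c i • v i := by
          simp only [hc', sub_smul, Finset.sum_sub_distrib, mul_smul]
          rw [← Finset.smul_sum, hdsum, smul_zero, sub_zero]
        have hc'supp : ∀ i, c' i ≠ 0 → c i ≠ 0 := by
          intro i hne hci
          apply hne
          have : d i = 0 := by
            by_contra hdi
            exact (hsupp i hdi) hci
          simp [hc', hci, this]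
        have hi₀c : c i₀ ≠ 0 := hsupp i₀ (ne_of_gt hdi₀)
        have hc'i₀ : c' i₀ = 0 := by
          simp only [hc']
          rw [hi₀]
          field_simp
          simp
        have hsubset : (univ.filter fun i => c' i ≠ 0) ⊆
            (univ.filter fun i => c i ≠ 0).erase i₀ := by
          intro i hi
          simp only [mem_filter, mem_univ, true_and] at hi
          rw [Finset.mem_erase]
          refine ⟨?_, by simp [hc'supp i hi]⟩
          rintro rfl; exact hi hc'i₀
        have hcard' : (univ.filter fun i => c' i ≠ 0).card ≤ k := by
          have h1 := Finset.card_le_card hsubset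
          have h2 : ((univ.filter fun i => c i ≠ 0).erase i₀).card
              = (univ.filter fun i => c i ≠ 0).card - 1 :=
            Finset.card_erase_of_mem (by simp [hi₀c])
          have h3 : 0 < (univ.filter fun i => c i ≠ 0).card :=
            card_pos.mpr ⟨i₀, by simp [hi₀c]⟩
          omega
        obtain ⟨c'', h1, h2, h3⟩ := ih c' hcard' hc'nn
        exact ⟨c'', h1, h2.trans hsum, h3⟩
      by_cases hpos : ∃ i, 0 < d i
      · refine key d hdsum ?_ hpos
        intro i hdi hci
        apply hdi; simp [hd, hci]
      · refine key (fun i => -d i)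
          (by simp only [neg_smul, Finset.sum_neg_distrib, hdsum, neg_zero]) ?_ ?_
        · intro i hdi hci
          apply hdi; simp [hd, hci]
        · push_neg at hpos
          refine ⟨(j : ι), ?_⟩
          have hdj : d (j : ι) = g j := by
            simp only [hd]
            rw [dif_pos j.2]
          have hle := hpos (j : ι)
          have : d (j : ι) < 0 := lt_of_le_of_ne hle (by rw [hdj]; exact hgj)
          show (0:ℝ) < -d (j : ι)
          linarith

/-- A finitely generated convex cone is closed. -/
lemma isClosed_coneSpan {ι : Type*} [Fintype ι] (v : ι → V) :
    IsClosed {x : V | ∃ c : ι → ℝ, (∀ i, 0 ≤ c i) ∧ x = ∑ i, c i • v i} := by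
  classical
  have hdecomp : {x : V | ∃ c : ι → ℝ, (∀ i, 0 ≤ c i) ∧ x = ∑ i, c i • v i} =
      ⋃ t : {t : Finset ι // LinearIndependent ℝ (fun i : {i // i ∈ t} => v i.1)},
        {x : V | ∃ c : {i // i ∈ t.1} → ℝ, (∀ i, 0 ≤ c i) ∧ x = ∑ i, c i • v i.1} := by
    ext x
    simp only [Set.mem_setOf_eq, Set.mem_iUnion]
    constructor
    · rintro ⟨c, hc, rfl⟩
      obtain ⟨c', hc'nn, hc'sum, hc'li⟩ := cone_carath v _ c le_rfl hc
      set t : Finset ι := univ.filter fun i => c' i ≠ 0 with htdef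
      have hmem : ∀ i : ι, i ∈ t ↔ c' i ≠ 0 := by intro i; simp [htdef]
      have hli : LinearIndependent ℝ (fun i : {i // i ∈ t} => v i.1) := by
        let e : {i // i ∈ t} ≃ {i // c' i ≠ 0} :=
          { toFun := fun i => ⟨i.1, (hmem i.1).mp i.2⟩
            invFun := fun i => ⟨i.1, (hmem i.1).mpr i.2⟩
            left_inv := fun i => rfl
            right_inv := fun i => rfl }
        exact hc'li.comp e e.injective
      refine ⟨⟨t, hli⟩, fun i => c' i.1, fun i => hc'nn i.1, ?_⟩
      rw [← hc'sum]
      rw [← Finset.sum_filter_of_ne (s := univ) (f := fun i => c' i • v i)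
        (p := fun i => c' i ≠ 0) (by intro i _ h hc0; exact h (by simp [hc0]))]
      rw [Finset.sum_subtype (p := fun i => i ∈ t) t (fun x => Iff.rfl) (fun i => c' i • v i)]
    · rintro ⟨⟨t, hli⟩, c, hc, rfl⟩
      refine ⟨fun i => if h : i ∈ t then c ⟨i, h⟩ else 0, ?_, ?_⟩
      · intro i
        by_cases h : i ∈ t <;> simp [h, hc]
      · symm
        rw [← Finset.sum_subset (Finset.subset_univ t)
          (f := fun i => (if h : i ∈ t then c ⟨i, h⟩ else 0) • v i)
          (by intro i _ hi; simp [hi])]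
        rw [Finset.sum_subtype (p := fun i => i ∈ t) t (fun x => Iff.rfl)]
        apply Finset.sum_congr rfl
        rintro ⟨i, hi⟩ _
        simp [hi]
  rw [hdecomp]
  apply isClosed_iUnion_of_finite
  rintro ⟨t, hli⟩
  let L : ({i // i ∈ t} → ℝ) →ₗ[ℝ] V :=
    { toFun := fun c => ∑ i, c i • v i.1
      map_add' := by
        intro a b
        simp [add_smul, Finset.sum_add_distrib]
      map_smul' := by
        intro r a
        simp [mul_smul, Finset.smul_sum] }
  have hinj : LinearMap.ker L = ⊥ := by
    rw [LinearMap.ker_eq_bot']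
    intro c hc
    have := Fintype.linearIndependent_iff.mp hli c hc
    funext i
    exact this i
  have hemb := LinearMap.isClosedEmbedding_of_injective (f := L) hinj
  have heq : {x : V | ∃ c : {i // i ∈ t} → ℝ, (∀ i, 0 ≤ c i) ∧ x = ∑ i, c i • v i.1} =
      L '' {c | ∀ i, 0 ≤ c i} := by
    ext x
    constructor
    · rintro ⟨c, hc, rfl⟩; exact ⟨c, hc, rfl⟩
    · rintro ⟨c, hc, rfl⟩; exact ⟨c, hc, rfl⟩
  rw [heq]
  have horth : IsClosed {c : {i // i ∈ t} → ℝ | ∀ i, 0 ≤ c i} := by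
    have : {c : {i // i ∈ t} → ℝ | ∀ i, 0 ≤ c i}
        = Set.pi Set.univ (fun _ => Set.Ici (0:ℝ)) := by
      ext c
      constructor
      · intro h i _; exact h i
      · intro h i; exact h i (Set.mem_univ i)
    rw [this]
    exact isClosed_set_pi fun i _ => isClosed_Ici
  exact hemb.isClosedMap _ horth

/-- A cone generated by finitely many free directions and finitely many nonnegative
directions is closed. -/
lemma isClosed_conicSum {ι₁ ι₂ : Type*} [Fintype ι₁] [Fintype ι₂] (v : ι₁ → V) (u : ι₂ → V) :
    IsClosed {x : V | ∃ (c : ι₁ → ℝ) (b : ι₂ → ℝ), (∀ j, 0 ≤ b j) ∧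
      x = (∑ i, c i • v i) + ∑ j, b j • u j} := by
  have : {x : V | ∃ (c : ι₁ → ℝ) (b : ι₂ → ℝ), (∀ j, 0 ≤ b j) ∧
      x = (∑ i, c i • v i) + ∑ j, b j • u j} =
      {x : V | ∃ c : (ι₁ ⊕ ι₁ ⊕ ι₂) → ℝ, (∀ i, 0 ≤ c i) ∧
        x = ∑ i, c i • (Sum.elim v (Sum.elim (fun i => -v i) u)) i} := by
    ext x
    simp only [Set.mem_setOf_eq]
    constructor
    · rintro ⟨c, b, hb, rfl⟩
      refine ⟨Sum.elim (fun i => max (c i) 0) (Sum.elim (fun i => max (-c i) 0) b), ?_, ?_⟩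
      · rintro (i | i | j) <;> simp [le_max_right, hb]
      · rw [Fintype.sum_sum_type, Fintype.sum_sum_type]
        simp only [Sum.elim_inl, Sum.elim_inr, smul_neg]
        have h1 : (∑ i, (max (c i) 0) • v i) + ∑ i, -((max (-c i) 0) • v i)
            = ∑ i, c i • v i := by
          rw [← Finset.sum_add_distrib]
          apply Finset.sum_congr rfl
          intro i _
          rw [← neg_smul, ← add_smul]
          congr 1
          rcases le_total (c i) 0 with h | h
          · rw [max_eq_right h, max_eq_left (by linarith)]; ring
          · rw [max_eq_left h, max_eq_right (by linarith)]; ring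
        rw [← add_assoc, h1]
    · rintro ⟨c, hc, rfl⟩
      refine ⟨fun i => c (Sum.inl i) - c (Sum.inr (Sum.inl i)), fun j => c (Sum.inr (Sum.inr j)),
        fun j => hc _, ?_⟩
      rw [Fintype.sum_sum_type, Fintype.sum_sum_type]
      simp only [Sum.elim_inl, Sum.elim_inr, smul_neg, sub_smul]
      rw [Finset.sum_sub_distrib, Finset.sum_neg_distrib]
      abel
  rw [this]
  exact isClosed_coneSpan _


section Eps

variable {n : ℕ} {ι : Type*} [Fintype ι] [Nonempty ι]

lemma isClosed_D (σ : ι → Fin n → ℝ) (F : Finset ι) :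
    IsClosed {d : ι → ℝ | ∃ w : Fin n → ℝ, ∀ A ∈ F, ∀ B : ι,
      dot w (σ A) + d A ≤ dot w (σ B) + d B} := by
  classical
  set v : (Unit ⊕ Fin n) → (ι → ℝ) :=
    Sum.elim (fun _ (_ : ι) => (1:ℝ)) (fun k B' => -(σ B' k)) with hv
  set u : {B : ι // B ∉ F} → (ι → ℝ) := fun j => Pi.single (j : ι) (1:ℝ) with hu
  have hev : ∀ (c : (Unit ⊕ Fin n) → ℝ) (B : ι),
      (∑ i, c i • v i) B = c (Sum.inl ()) - dot (fun k => c (Sum.inr k)) (σ B) := by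
    intro c B
    rw [Finset.sum_apply, Fintype.sum_sum_type]
    simp only [hv, Pi.smul_apply, Sum.elim_inl, Sum.elim_inr, smul_eq_mul, mul_one, mul_neg]
    rw [Finset.sum_neg_distrib]
    simp [dot, sub_eq_add_neg]
  have huev : ∀ (b : {B : ι // B ∉ F} → ℝ) (B : ι),
      (∑ j, b j • u j) B = if h : B ∉ F then b ⟨B, h⟩ else 0 := by
    intro b B
    rw [Finset.sum_apply]
    simp only [hu, Pi.smul_apply, smul_eq_mul, Pi.single_apply]
    by_cases hB : B ∉ F
    · rw [dif_pos hB]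
      rw [Finset.sum_eq_single ⟨B, hB⟩]
      · simp
      · rintro ⟨B', hB'⟩ _ hne
        have : B ≠ B' := by
          rintro rfl; exact hne rfl
        simp [this]
      · intro h; exact absurd (Finset.mem_univ _) h
    · rw [dif_neg hB]
      apply Finset.sum_eq_zero
      rintro ⟨B', hB'⟩ _
      have : B ≠ B' := by rintro rfl; exact hB hB'
      simp [this]
  have key : {d : ι → ℝ | ∃ w : Fin n → ℝ, ∀ A ∈ F, ∀ B : ι,
      dot w (σ A) + d A ≤ dot w (σ B) + d B} =
      {d : ι → ℝ | ∃ (c : (Unit ⊕ Fin n) → ℝ) (b : {B : ι // B ∉ F} → ℝ), (∀ j, 0 ≤ b j) ∧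
        d = (∑ i, c i • v i) + ∑ j, b j • u j} := by
    ext d
    simp only [Set.mem_setOf_eq]
    constructor
    · rintro ⟨w, hw⟩
      set t : ℝ := Finset.univ.inf' Finset.univ_nonempty (fun B => dot w (σ B) + d B) with htd
      have htle : ∀ B, t ≤ dot w (σ B) + d B := fun B =>
        Finset.inf'_le _ (Finset.mem_univ B)
      refine ⟨Sum.elim (fun _ => t) w, fun j => d (j : ι) - (t - dot w (σ (j : ι))), ?_, ?_⟩
      · intro j
        have := htle (j : ι)
        simp only [sub_nonneg]
        linarith
      · funext B
        rw [Pi.add_apply, hev, huev]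
        simp only [Sum.elim_inl, Sum.elim_inr]
        by_cases hB : B ∉ F
        · rw [dif_pos hB]; ring
        · rw [dif_neg hB]
          push_neg at hB
          have hle : dot w (σ B) + d B ≤ t := by
            apply Finset.le_inf'
            intro B' _
            exact hw B hB B'
          have := htle B
          have : dot w (σ B) + d B = t := le_antisymm hle this
          linarith
    · rintro ⟨c, b, hb, rfl⟩
      refine ⟨fun k => c (Sum.inr k), ?_⟩
      intro A hA B
      rw [Pi.add_apply, Pi.add_apply, hev, hev, huev, huev]
      rw [dif_neg (by simpa using hA)]
      by_cases hB : B ∉ F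
      · rw [dif_pos hB]
        have := hb ⟨B, hB⟩
        linarith
      · rw [dif_neg hB]
        linarith
  rw [key]
  exact isClosed_conicSum v u

/-- The key perturbation lemma: minimizers for slightly perturbed heights are minimizers
for the original heights with respect to a possibly different direction. -/
lemma exists_good_eps (σ : ι → Fin n → ℝ) (h : ι → ℝ) :
    ∃ ε > (0:ℝ), ∀ h' : ι → ℝ, (∀ A, |h' A - h A| < ε) → ∀ w : Fin n → ℝ,
      ∃ w' : Fin n → ℝ, ∀ A : ι,
        (∀ B, dot w (σ A) + h' A ≤ dot w (σ B) + h' B) →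
        (∀ B, dot w' (σ A) + h A ≤ dot w' (σ B) + h B) := by
  classical
  set D : Finset ι → Set (ι → ℝ) := fun F => {d : ι → ℝ | ∃ w : Fin n → ℝ, ∀ A ∈ F, ∀ B : ι,
      dot w (σ A) + d A ≤ dot w (σ B) + d B} with hD
  have hδ : ∀ F : Finset ι, ∃ δ > (0:ℝ), h ∉ D F → ∀ d ∈ D F, δ ≤ dist d h := by
    intro F
    by_cases hh : h ∈ D F
    · exact ⟨1, one_pos, fun h' => absurd hh h'⟩
    · have hop : IsOpen (D F)ᶜ := (isClosed_D σ F).isOpen_compl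
      obtain ⟨δ, hδpos, hball⟩ := Metric.isOpen_iff.mp hop h hh
      refine ⟨δ, hδpos, fun _ d hd => ?_⟩
      by_contra hc
      push_neg at hc
      exact (hball (Metric.mem_ball.mpr hc)) hd
  choose δ hδpos hδball using hδ
  set ε : ℝ := Finset.univ.inf' Finset.univ_nonempty δ with hε
  have hεpos : 0 < ε := by
    rw [hε, Finset.lt_inf'_iff]
    intro F _
    exact hδpos F
  refine ⟨ε, hεpos, ?_⟩
  · intro h' hh' w
    set F : Finset ι := Finset.univ.filter
      (fun A => ∀ B, dot w (σ A) + h' A ≤ dot w (σ B) + h' B) with hF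
    have hh'D : h' ∈ D F := by
      refine ⟨w, fun A hA B => ?_⟩
      rw [hF, Finset.mem_filter] at hA
      exact hA.2 B
    have hdist : dist h' h < ε := by
      rw [dist_pi_lt_iff hεpos]
      intro A
      rw [Real.dist_eq]
      exact hh' A
    have hhD : h ∈ D F := by
      by_contra hh
      have := hδball F hh h' hh'D
      have hεle : ε ≤ δ F := Finset.inf'_le _ (Finset.mem_univ F)
      linarith
    obtain ⟨w', hw'⟩ := hhD
    refine ⟨w', fun A hA => hw' A ?_⟩
    rw [hF, Finset.mem_filter]
    exact ⟨Finset.mem_univ A, hA⟩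

end Eps

end ConeBlock

section Helpers

open Finset

lemma mk_hull {κ V : Type*} [Fintype κ] [AddCommGroup V] [Module ℝ V]
    (f : κ → V) (μ : κ → ℝ) (h0 : ∀ k, 0 ≤ μ k) (h1 : ∑ k, μ k = 1) :
    ∑ k, μ k • f k ∈ convexHull ℝ (Set.range f) :=
  (convex_convexHull ℝ _).sum_mem (fun k _ => h0 k) h1
    (fun k _ => subset_convexHull ℝ _ (Set.mem_range_self k))

lemma ext_hull {κ V : Type*} [Fintype κ] [Nonempty κ] [AddCommGroup V] [Module ℝ V]
    (f : κ → V) (x : V) (hx : x ∈ convexHull ℝ (Set.range f)) :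
    ∃ μ : κ → ℝ, (∀ k, 0 ≤ μ k) ∧ ∑ k, μ k = 1 ∧ ∑ k, μ k • f k = x := by
  classical
  rw [_root_.convexHull_eq] at hx
  obtain ⟨ι', t, w, z, hw0, hw1, hz, hx⟩ := hx
  choose ch hch using fun (i : ι') (hi : i ∈ t) => (hz i hi : z i ∈ Set.range f)
  set g : ι' → κ := fun i => if hi : i ∈ t then ch i hi else Classical.arbitrary κ with hg
  refine ⟨fun k => ∑ i ∈ t.filter (fun i => g i = k), w i, ?_, ?_, ?_⟩
  · intro k
    exact Finset.sum_nonneg fun i hi => hw0 i (Finset.mem_filter.mp hi).1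
  · rw [Finset.sum_fiberwise_of_maps_to (fun i _ => Finset.mem_univ (g i))]
    exact hw1
  · rw [← hx, Finset.centerMass_eq_of_sum_1 _ _ hw1]
    rw [← Finset.sum_fiberwise_of_maps_to (fun i _ => Finset.mem_univ (g i))
      (fun i => w i • z i)]
    apply Finset.sum_congr rfl
    intro k _
    rw [Finset.sum_smul]
    apply Finset.sum_congr rfl
    intro i hi
    obtain ⟨hit, hgi⟩ := Finset.mem_filter.mp hi
    rw [← hgi, hg]
    simp only [dif_pos hit]
    rw [hch i hit]

/-- Extraction of convex-combination weights for the hull of a finite image. -/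
lemma ext_hull_finset {κ V : Type*} [Fintype κ] [AddCommGroup V] [Module ℝ V]
    (f : κ → V) (F : Finset κ) (hF : F.Nonempty) (x : V)
    (hx : x ∈ convexHull ℝ (f '' ↑F)) :
    ∃ μ : κ → ℝ, (∀ k, 0 ≤ μ k) ∧ (∀ k ∉ F, μ k = 0) ∧ ∑ k, μ k = 1 ∧ ∑ k, μ k • f k = x := by
  classical
  haveI : Nonempty {k // k ∈ F} := ⟨⟨hF.choose, hF.choose_spec⟩⟩
  have himg : f '' ↑F = Set.range (fun k : {k // k ∈ F} => f k.1) := by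
    rw [Set.image_eq_range]
    rfl
  rw [himg] at hx
  obtain ⟨μ₀, h0, h1, h2⟩ := ext_hull _ x hx
  refine ⟨fun k => if h : k ∈ F then μ₀ ⟨k, h⟩ else 0, ?_, ?_, ?_, ?_⟩
  · intro k
    by_cases h : k ∈ F <;> simp [h, h0]
  · intro k hk
    simp [hk]
  · rw [← Finset.sum_subset (Finset.subset_univ F) (by intro k _ hk; simp [hk]), ← h1,
      Finset.sum_subtype (p := fun k => k ∈ F) F (fun x => Iff.rfl)]
    apply Finset.sum_congr rfl
    rintro ⟨k, hk⟩ _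
    simp [hk]
  · rw [← Finset.sum_subset (Finset.subset_univ F) (by intro k _ hk; simp [hk]), ← h2,
      Finset.sum_subtype (p := fun k => k ∈ F) F (fun x => Iff.rfl)]
    apply Finset.sum_congr rfl
    rintro ⟨k, hk⟩ _
    simp [hk]

lemma dot_smul_sum {n : ℕ} {κ : Type*} [Fintype κ] (w : Fin n → ℝ) (c : κ → ℝ)
    (f : κ → Fin n → ℝ) : dot w (∑ k, c k • f k) = ∑ k, c k * dot w (f k) := by
  simp only [dot, Finset.sum_apply, Pi.smul_apply, smul_eq_mul, Finset.mul_sum]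
  rw [Finset.sum_comm]
  apply Finset.sum_congr rfl
  intro k _
  apply Finset.sum_congr rfl
  intro j _
  ring

lemma dot_sum {n : ℕ} {κ : Type*} [Fintype κ] (w : Fin n → ℝ) (f : κ → Fin n → ℝ) :
    dot w (∑ k, f k) = ∑ k, dot w (f k) := by
  simp only [dot, Finset.sum_apply, Finset.mul_sum]
  rw [Finset.sum_comm]

lemma mem_finsetSum_sets {α β : Type*} [AddCommMonoid α] (t : Finset β) (S : β → Set α)
    (x : α) : x ∈ (∑ b ∈ t, S b) ↔ ∃ y : β → α, (∀ b ∈ t, y b ∈ S b) ∧ ∑ b ∈ t, y b = x := by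
  classical
  induction t using Finset.induction generalizing x with
  | empty =>
    simp only [Finset.sum_empty]
    constructor
    · intro hx
      exact ⟨fun _ => 0, by simp, by simpa using hx.symm⟩
    · rintro ⟨y, -, rfl⟩
      simp
  | @insert a t ha ih =>
    rw [Finset.sum_insert ha, Set.mem_add]
    constructor
    · rintro ⟨u, hu, v, hv, rfl⟩
      obtain ⟨y, hy, hysum⟩ := (ih v).mp hv
      refine ⟨fun b => if b = a then u else y b, ?_, ?_⟩
      · intro b hb
        rcases Finset.mem_insert.mp hb with rfl | hbt
        · simp [hu]
        · have : b ≠ a := by rintro rfl; exact ha hbt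
          simpa [this] using hy b hbt
      · rw [Finset.sum_insert ha]
        simp only [if_pos rfl]
        congr 1
        rw [← hysum]
        apply Finset.sum_congr rfl
        intro b hb
        have : b ≠ a := by rintro rfl; exact ha hb
        simp [this]
    · rintro ⟨y, hy, hsum⟩
      refine ⟨y a, hy a (Finset.mem_insert_self a t), ∑ b ∈ t, y b,
        (ih _).mpr ⟨y, fun b hb => hy b (Finset.mem_insert_of_mem hb), rfl⟩, ?_⟩
      rw [← hsum, Finset.sum_insert ha]

end Helpers

section Geometry

open Finset

variable {n s : ℕ}

/-- The `i`-th Newton polytope. -/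
def Lam (C : Fin s → Finset (Fin n → ℤ)) (i : Fin s) : Set (Fin n → ℝ) :=
  convexHull ℝ (castZ '' ↑(C i))

/-- The type of tuples of lattice points. -/
abbrev IdxT (C : Fin s → Finset (Fin n → ℤ)) := ∀ i : Fin s, {a // a ∈ C i}

instance idxNe (C : Fin s → Finset (Fin n → ℤ)) [h : ∀ i, Nonempty {a // a ∈ C i}] :
    Nonempty (IdxT C) := ⟨fun i => Classical.arbitrary _⟩

def sig {C : Fin s → Finset (Fin n → ℤ)} (A : IdxT C) : Fin n → ℝ :=
  ∑ i, castZ (A i : Fin n → ℤ)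

def hgt {C : Fin s → Finset (Fin n → ℤ)} (η : ∀ i, {a // a ∈ C i} → ℝ) (A : IdxT C) : ℝ :=
  ∑ i, η i (A i)

/-- The lifted points. -/
def lift (S : Finset (Fin n → ℤ)) (η : {a // a ∈ S} → ℝ) : {a // a ∈ S} → (Fin n → ℝ) × ℝ :=
  fun a => (castZ (a : Fin n → ℤ), η a)

lemma lowerEnv_def (S : Finset (Fin n → ℤ)) (η : {a // a ∈ S} → ℝ) (x : Fin n → ℝ) :
    lowerEnv S η x = sInf {t | (x, t) ∈ convexHull ℝ (Set.range (lift S η))} := rfl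

lemma hull_eq_range (S : Finset (Fin n → ℤ)) :
    castZ '' ↑S = Set.range (fun a : {a // a ∈ S} => castZ (a : Fin n → ℤ)) := by
  rw [Set.image_eq_range]; rfl

section PerPiece

variable (S : Finset (Fin n → ℤ)) [Nonempty {a // a ∈ S}] (η : {a // a ∈ S} → ℝ)

/-- The minimal lifted value in direction `w` over the `i`-th point configuration. -/
noncomputable def miV (w : Fin n → ℝ) : ℝ :=
  univ.inf' univ_nonempty (fun a : {a // a ∈ S} => dot w (castZ (a : Fin n → ℤ)) + η a)

lemma lift_comb {κ : Type} [Fintype κ] (p : κ → {a // a ∈ S}) (μ : κ → ℝ)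
    (h0 : ∀ k, 0 ≤ μ k) (h1 : ∑ k, μ k = 1) :
    ((∑ k, μ k • castZ ((p k : Fin n → ℤ))), (∑ k, μ k * η (p k))) ∈
      convexHull ℝ (Set.range (lift S η)) := by
  have hsum : ∑ k, μ k • lift S η (p k)
      = ((∑ k, μ k • castZ ((p k : Fin n → ℤ))), (∑ k, μ k * η (p k))) := by
    rw [Prod.ext_iff]
    constructor
    · rw [Prod.fst_sum]
      apply Finset.sum_congr rfl
      intro k _
      rfl
    · rw [Prod.snd_sum]
      apply Finset.sum_congr rfl
      intro k _
      rfl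
  rw [← hsum]
  exact (convex_convexHull ℝ _).sum_mem (fun k _ => h0 k) h1
    (fun k _ => subset_convexHull ℝ _ (Set.mem_range_self (p k)))

lemma slice_lb (w x : Fin n → ℝ) :
    ∀ t : ℝ, (x, t) ∈ convexHull ℝ (Set.range (lift S η)) → miV S η w ≤ dot w x + t := by
  intro t ht
  obtain ⟨μ, h0, h1, h2⟩ := ext_hull (lift S η) (x, t) ht
  have hx : ∑ a, μ a • castZ ((a : {a // a ∈ S}) : Fin n → ℤ) = x := by
    have := congrArg Prod.fst h2
    rw [Prod.fst_sum] at this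
    simpa [lift] using this
  have ht' : ∑ a, μ a * η a = t := by
    have := congrArg Prod.snd h2
    rw [Prod.snd_sum] at this
    simpa [lift] using this
  have key : dot w x + t = ∑ a : {a // a ∈ S}, μ a * (dot w (castZ (a : Fin n → ℤ)) + η a) := by
    rw [← hx, ← ht', dot_smul_sum, ← Finset.sum_add_distrib]
    apply Finset.sum_congr rfl
    intro a _
    ring
  rw [key]
  calc miV S η w = ∑ a : {a // a ∈ S}, μ a * miV S η w := by
        rw [← Finset.sum_mul, h1, one_mul]
    _ ≤ ∑ a : {a // a ∈ S}, μ a * (dot w (castZ (a : Fin n → ℤ)) + η a) := by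
        apply Finset.sum_le_sum
        intro a _
        exact mul_le_mul_of_nonneg_left (Finset.inf'_le _ (Finset.mem_univ a)) (h0 a)

lemma slice_nonempty (x : Fin n → ℝ) (hx : x ∈ convexHull ℝ (castZ '' ↑S)) :
    ∃ t : ℝ, (x, t) ∈ convexHull ℝ (Set.range (lift S η)) := by
  rw [hull_eq_range] at hx
  obtain ⟨μ, h0, h1, h2⟩ := ext_hull _ x hx
  exact ⟨∑ a, μ a * η a, h2 ▸ lift_comb S η id μ h0 h1⟩

lemma lowerEnv_ge (w x : Fin n → ℝ) (hx : x ∈ convexHull ℝ (castZ '' ↑S)) :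
    miV S η w - dot w x ≤ lowerEnv S η x := by
  rw [lowerEnv_def]
  obtain ⟨t₀, ht₀⟩ := slice_nonempty S η x hx
  apply le_csInf ⟨t₀, ht₀⟩
  intro t ht
  have := slice_lb S η w x t ht
  linarith

lemma lowerEnv_le {κ : Type} [Fintype κ] (p : κ → {a // a ∈ S}) (μ : κ → ℝ)
    (h0 : ∀ k, 0 ≤ μ k) (h1 : ∑ k, μ k = 1) :
    lowerEnv S η (∑ k, μ k • castZ ((p k : Fin n → ℤ))) ≤ ∑ k, μ k * η (p k) := by
  rw [lowerEnv_def]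
  apply csInf_le
  · refine ⟨miV S η 0 - dot 0 (∑ k, μ k • castZ ((p k : Fin n → ℤ))), ?_⟩
    intro t ht
    have := slice_lb S η 0 _ t ht
    linarith
  · exact lift_comb S η p μ h0 h1

end PerPiece

section Conv

variable (C : Fin s → Finset (Fin n → ℤ)) [∀ i, Nonempty {a // a ∈ C i}]
variable (η : ∀ i : Fin s, {a // a ∈ C i} → ℝ)

/-- The minimal lifted value in direction `w` over tuples. -/
noncomputable def mval (w : Fin n → ℝ) : ℝ :=
  univ.inf' univ_nonempty (fun A : IdxT C => dot w (sig A) + hgt η A)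

lemma mval_eq_sum_miV (w : Fin n → ℝ) :
    mval C η w = ∑ i, miV (C i) (η i) w := by
  apply le_antisymm
  · have hex : ∀ i : Fin s, ∃ a : {a // a ∈ C i},
        miV (C i) (η i) w = dot w (castZ (a : Fin n → ℤ)) + η i a := by
      intro i
      obtain ⟨a, _, ha⟩ := Finset.exists_mem_eq_inf' (univ_nonempty)
        (fun a : {a // a ∈ C i} => dot w (castZ (a : Fin n → ℤ)) + η i a)
      exact ⟨a, ha⟩
    choose astar hastar using hex
    have : mval C η w ≤ dot w (sig astar) + hgt η astar :=
      Finset.inf'_le _ (Finset.mem_univ _)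
    calc mval C η w ≤ dot w (sig astar) + hgt η astar := this
      _ = ∑ i, miV (C i) (η i) w := by
          rw [sig, hgt, dot_sum, ← Finset.sum_add_distrib]
          apply Finset.sum_congr rfl
          intro i _
          exact (hastar i).symm
  · apply Finset.le_inf'
    intro A _
    rw [sig, hgt, dot_sum, ← Finset.sum_add_distrib]
    apply Finset.sum_le_sum
    intro i _
    exact Finset.inf'_le _ (Finset.mem_univ _)

lemma theta_elem_lb (x : Fin n → ℝ) (w : Fin n → ℝ) (t : ℝ)
    (ht : ∃ y : Fin s → Fin n → ℝ, (∀ i, y i ∈ Lam C i) ∧ (∑ i, y i) = x ∧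
      (∑ i, lowerEnv (C i) (η i) (y i)) = t) :
    mval C η w ≤ dot w x + t := by
  obtain ⟨y, hy, hsum, rfl⟩ := ht
  rw [mval_eq_sum_miV, ← hsum, dot_sum, ← Finset.sum_add_distrib]
  apply Finset.sum_le_sum
  intro i _
  have := lowerEnv_ge (C i) (η i) w (y i) (hy i)
  linarith

lemma theta_ge (x : Fin n → ℝ) (hx : x ∈ ∑ i, Lam C i) (w : Fin n → ℝ) :
    mval C η w ≤ dot w x + infConv (Lam C) (fun i => lowerEnv (C i) (η i)) x := by
  obtain ⟨y, hy, hsum⟩ := (mem_finsetSum_sets univ (Lam C) x).mp hx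
  have hne : ∃ t, t ∈ {t | ∃ y : Fin s → Fin n → ℝ, (∀ i, y i ∈ Lam C i) ∧ (∑ i, y i) = x ∧
      (∑ i, lowerEnv (C i) (η i) (y i)) = t} :=
    ⟨_, ⟨y, fun i => hy i (Finset.mem_univ i), hsum, rfl⟩⟩
  have : mval C η w - dot w x ≤ infConv (Lam C) (fun i => lowerEnv (C i) (η i)) x := by
    apply le_csInf hne
    intro t ht
    have := theta_elem_lb C η x w t ht
    linarith
  linarith

lemma theta_bddBelow (x : Fin n → ℝ) :
    BddBelow {t | ∃ y : Fin s → Fin n → ℝ, (∀ i, y i ∈ Lam C i) ∧ (∑ i, y i) = x ∧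
      (∑ i, lowerEnv (C i) (η i) (y i)) = t} := by
  refine ⟨mval C η 0 - dot 0 x, ?_⟩
  intro t ht
  have := theta_elem_lb C η x 0 t ht
  linarith

lemma theta_le {κ : Type} [Fintype κ] (q : κ → IdxT C) (μ : κ → ℝ)
    (h0 : ∀ k, 0 ≤ μ k) (h1 : ∑ k, μ k = 1) :
    infConv (Lam C) (fun i => lowerEnv (C i) (η i)) (∑ k, μ k • sig (q k)) ≤
      ∑ k, μ k * hgt η (q k) := by
  set y : Fin s → Fin n → ℝ := fun i => ∑ k, μ k • castZ ((q k i : Fin n → ℤ)) with hy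
  have hyi : ∀ i, y i ∈ Lam C i := by
    intro i
    rw [Lam, hull_eq_range]
    exact (convex_convexHull ℝ _).sum_mem (fun k _ => h0 k) h1
      (fun k _ => subset_convexHull ℝ _ ⟨q k i, rfl⟩)
  have hsum : ∑ i, y i = ∑ k, μ k • sig (q k) := by
    simp only [hy]
    rw [Finset.sum_comm]
    apply Finset.sum_congr rfl
    intro k _
    rw [sig, Finset.smul_sum]
  have hθ : infConv (Lam C) (fun i => lowerEnv (C i) (η i)) (∑ k, μ k • sig (q k)) ≤
      ∑ i, lowerEnv (C i) (η i) (y i) := by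
    apply csInf_le (theta_bddBelow C η _)
    exact ⟨y, hyi, hsum, rfl⟩
  refine le_trans hθ ?_
  have hples : ∀ i, lowerEnv (C i) (η i) (y i) ≤ ∑ k, μ k * η i (q k i) :=
    fun i => lowerEnv_le (C i) (η i) (fun k => q k i) μ h0 h1
  calc ∑ i, lowerEnv (C i) (η i) (y i) ≤ ∑ i, ∑ k, μ k * η i (q k i) :=
        Finset.sum_le_sum fun i _ => hples i
    _ = ∑ k, μ k * hgt η (q k) := by
        rw [Finset.sum_comm]
        apply Finset.sum_congr rfl
        intro k _
        rw [hgt, Finset.mul_sum]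

end Conv

end Geometry

section Chunk3

open Finset

variable {n s : ℕ}
variable (C : Fin s → Finset (Fin n → ℤ)) [∀ i, Nonempty {a // a ∈ C i}]
variable (η : ∀ i : Fin s, {a // a ∈ C i} → ℝ)

lemma prodw_sum_one (μ : ∀ i : Fin s, {a // a ∈ C i} → ℝ) (hμ : ∀ i, ∑ a, μ i a = 1) :
    ∑ A : IdxT C, ∏ i, μ i (A i) = 1 := by
  classical
  rw [← Fintype.prod_sum μ]
  exact Finset.prod_eq_one fun i _ => hμ i

lemma marginal_scalar (μ : ∀ i : Fin s, {a // a ∈ C i} → ℝ) (hμ : ∀ i, ∑ a, μ i a = 1)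
    (j : Fin s) (f : {a // a ∈ C j} → ℝ) :
    ∑ A : IdxT C, (∏ i, μ i (A i)) * f (A j) = ∑ a, μ j a * f a := by
  classical
  set g : {a // a ∈ C j} → ℝ := fun a => μ j a * f a with hg
  set μ' : ∀ i, {a // a ∈ C i} → ℝ := Function.update μ j g with hμ'
  have hj : μ' j = g := by rw [hμ']; simp
  have h1 : ∀ A : IdxT C, (∏ i, μ i (A i)) * f (A j) = ∏ i, μ' i (A i) := by
    intro A
    rw [Finset.prod_eq_mul_prod_sdiff_singleton_of_mem (Finset.mem_univ j) (fun i => μ' i (A i)),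
        Finset.prod_eq_mul_prod_sdiff_singleton_of_mem (Finset.mem_univ j) (fun i => μ i (A i))]
    have hrest : ∏ i ∈ univ \ {j}, μ' i (A i) = ∏ i ∈ univ \ {j}, μ i (A i) := by
      apply Finset.prod_congr rfl
      intro i hi
      have hij : i ≠ j := by
        rw [Finset.mem_sdiff, Finset.mem_singleton] at hi
        exact hi.2
      rw [hμ', Function.update_of_ne hij]
    rw [hj, hrest, hg]
    ring
  rw [Finset.sum_congr rfl (fun A _ => h1 A), ← Fintype.prod_sum μ']
  rw [Finset.prod_eq_mul_prod_sdiff_singleton_of_mem (Finset.mem_univ j) (fun i => ∑ a, μ' i a)]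
  have hrest : ∏ i ∈ univ \ {j}, ∑ a, μ' i a = 1 := by
    apply Finset.prod_eq_one
    intro i hi
    have hij : i ≠ j := by
      rw [Finset.mem_sdiff, Finset.mem_singleton] at hi
      exact hi.2
    rw [hμ', Function.update_of_ne hij]
    exact hμ i
  rw [hj, hrest, mul_one, hg]

lemma marginal_vec (μ : ∀ i : Fin s, {a // a ∈ C i} → ℝ) (hμ : ∀ i, ∑ a, μ i a = 1)
    (j : Fin s) (v : {a // a ∈ C j} → Fin n → ℝ) :
    ∑ A : IdxT C, (∏ i, μ i (A i)) • v (A j) = ∑ a, μ j a • v a := by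
  funext k
  rw [Finset.sum_apply, Finset.sum_apply]
  simp only [Pi.smul_apply, smul_eq_mul]
  exact marginal_scalar C μ hμ j (fun a => v a k)

/-- Key construction: product weights from a near-optimal decomposition. -/
lemma core_weights (w x : Fin n → ℝ) (δ : ℝ) (hδ : 0 < δ) (y : Fin s → Fin n → ℝ)
    (hy : ∀ i, y i ∈ Lam C i) (hsum : ∑ i, y i = x)
    (hval : ∑ i, lowerEnv (C i) (η i) (y i) < mval C η w - dot w x + δ) :
    ∃ P : IdxT C → ℝ, (∀ A, 0 ≤ P A) ∧ ∑ A, P A = 1 ∧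
      (∑ A, P A * (dot w (sig A) + hgt η A)) < mval C η w + δ ∧
      ∀ j, ∑ A, P A • castZ ((A j : Fin n → ℤ)) = y j := by
  classical
  set r : ℝ := mval C η w - dot w x + δ - ∑ i, lowerEnv (C i) (η i) (y i) with hr
  have hrpos : 0 < r := by rw [hr]; linarith
  set ρ : ℝ := r / (s + 1) with hρ
  have hρpos : 0 < ρ := by positivity
  have hex : ∀ i : Fin s, ∃ t : ℝ, (y i, t) ∈ convexHull ℝ (Set.range (lift (C i) (η i))) ∧
      t < lowerEnv (C i) (η i) (y i) + ρ := by
    intro i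
    have hne := slice_nonempty (C i) (η i) (y i) (hy i)
    have hlt : sInf {t | (y i, t) ∈ convexHull ℝ (Set.range (lift (C i) (η i)))} <
        lowerEnv (C i) (η i) (y i) + ρ := by
      rw [← lowerEnv_def]
      linarith
    obtain ⟨t, ht, htlt⟩ := exists_lt_of_csInf_lt hne hlt
    exact ⟨t, ht, htlt⟩
  choose t ht htlt using hex
  have hexμ : ∀ i : Fin s, ∃ μ : {a // a ∈ C i} → ℝ, (∀ a, 0 ≤ μ a) ∧ (∑ a, μ a = 1) ∧
      (∑ a, μ a • castZ ((a : {a // a ∈ C i}) : Fin n → ℤ) = y i) ∧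
      (∑ a, μ a * η i a = t i) := by
    intro i
    obtain ⟨μ, h0, h1, h2⟩ := ext_hull (lift (C i) (η i)) (y i, t i) (ht i)
    refine ⟨μ, h0, h1, ?_, ?_⟩
    · have := congrArg Prod.fst h2
      rw [Prod.fst_sum] at this
      simpa [lift] using this
    · have := congrArg Prod.snd h2
      rw [Prod.snd_sum] at this
      simpa [lift] using this
  choose μ hμ0 hμ1 hμx hμt using hexμ
  refine ⟨fun A => ∏ i, μ i (A i), fun A => Finset.prod_nonneg fun i _ => hμ0 i (A i),
    prodw_sum_one C μ hμ1, ?_, fun j => (marginal_vec C μ hμ1 j _).trans (hμx j)⟩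
  have hgA : ∀ A : IdxT C, dot w (sig A) + hgt η A =
      ∑ i, (dot w (castZ ((A i : Fin n → ℤ))) + η i (A i)) := by
    intro A
    rw [sig, hgt, dot_sum, ← Finset.sum_add_distrib]
  have hswap : ∑ A : IdxT C, (∏ i, μ i (A i)) * (dot w (sig A) + hgt η A)
      = ∑ i, (dot w (y i) + t i) := by
    calc ∑ A : IdxT C, (∏ i, μ i (A i)) * (dot w (sig A) + hgt η A)
        = ∑ A : IdxT C, ∑ i, (∏ i', μ i' (A i')) * (dot w (castZ ((A i : Fin n → ℤ))) + η i (A i)) := by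
          apply Finset.sum_congr rfl
          intro A _
          rw [hgA, Finset.mul_sum]
      _ = ∑ i, ∑ A : IdxT C, (∏ i', μ i' (A i')) * (dot w (castZ ((A i : Fin n → ℤ))) + η i (A i)) :=
          Finset.sum_comm
      _ = ∑ i, ∑ a, μ i a * (dot w (castZ ((a : {a // a ∈ C i}) : Fin n → ℤ)) + η i a) := by
          apply Finset.sum_congr rfl
          intro i _
          exact marginal_scalar C μ hμ1 i
            (fun a => dot w (castZ ((a : {a // a ∈ C i}) : Fin n → ℤ)) + η i a)
      _ = ∑ i, (dot w (y i) + t i) := by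
          apply Finset.sum_congr rfl
          intro i _
          rw [← hμx i, ← hμt i, dot_smul_sum, ← Finset.sum_add_distrib]
          apply Finset.sum_congr rfl
          intro a _
          ring
  rw [hswap]
  have h1 : ∑ i, (dot w (y i) + t i) = dot w x + ∑ i, t i := by
    rw [Finset.sum_add_distrib, ← dot_sum, hsum]
  have hle2 : ∑ i, t i ≤ (∑ i, lowerEnv (C i) (η i) (y i)) + (s : ℝ) * ρ := by
    have hh : ∑ i, t i ≤ ∑ i, (lowerEnv (C i) (η i) (y i) + ρ) :=
      Finset.sum_le_sum fun i _ => (htlt i).le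
    rw [Finset.sum_add_distrib, Finset.sum_const, card_univ, Fintype.card_fin,
      nsmul_eq_mul] at hh
    exact hh
  have hρr : (s : ℝ) * ρ + ρ = r := by
    rw [hρ]
    field_simp
  have hψ : ∑ i, lowerEnv (C i) (η i) (y i) = mval C η w - dot w x + δ - r := by
    rw [hr]; ring
  rw [h1]
  linarith

end Chunk3

section Chunk4

open Finset

variable {n s : ℕ}
variable (C : Fin s → Finset (Fin n → ℤ)) [∀ i, Nonempty {a // a ∈ C i}]
variable (η : ∀ i : Fin s, {a // a ∈ C i} → ℝ)

lemma sig_mem_LamS (A : IdxT C) : sig A ∈ ∑ i, Lam C i := by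
  rw [mem_finsetSum_sets]
  refine ⟨fun i => castZ ((A i : Fin n → ℤ)), fun i _ => ?_, rfl⟩
  exact subset_convexHull ℝ _ (Set.mem_image_of_mem castZ (Finset.mem_coe.mpr (A i).2))

lemma theta_le_single (A : IdxT C) :
    infConv (Lam C) (fun i => lowerEnv (C i) (η i)) (sig A) ≤ hgt η A := by
  have h := theta_le C η (fun _ : PUnit.{1} => A) (fun _ => (1:ℝ)) (fun _ => zero_le_one)
    (by simp)
  simpa using h

lemma suppVal_eq (w : Fin n → ℝ) :
    suppVal (epigraph (∑ i, Lam C i) (infConv (Lam C) (fun i => lowerEnv (C i) (η i)))) w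
      = mval C η w := by
  obtain ⟨A, -, hA⟩ := Finset.exists_mem_eq_inf' (univ_nonempty)
    (fun A : IdxT C => dot w (sig A) + hgt η A)
  have hlb : ∀ r ∈ (fun p : (Fin n → ℝ) × ℝ => dot w p.1 + p.2) ''
      (epigraph (∑ i, Lam C i) (infConv (Lam C) (fun i => lowerEnv (C i) (η i)))),
      mval C η w ≤ r := by
    rintro r ⟨p, ⟨hp1, hp2⟩, rfl⟩
    have := theta_ge C η p.1 hp1 w
    show mval C η w ≤ dot w p.1 + p.2
    linarith
  have hmem : mval C η w ∈ (fun p : (Fin n → ℝ) × ℝ => dot w p.1 + p.2) ''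
      (epigraph (∑ i, Lam C i) (infConv (Lam C) (fun i => lowerEnv (C i) (η i)))) := by
    refine ⟨(sig A, hgt η A), ⟨sig_mem_LamS C A, theta_le_single C η A⟩, hA.symm⟩
  exact le_antisymm (csInf_le ⟨mval C η w, hlb⟩ hmem) (le_csInf ⟨_, hmem⟩ hlb)

lemma cell_mem_iff (w x : Fin n → ℝ) :
    x ∈ cell (∑ i, Lam C i) (infConv (Lam C) (fun i => lowerEnv (C i) (η i))) w ↔
      x ∈ (∑ i, Lam C i) ∧
        dot w x + infConv (Lam C) (fun i => lowerEnv (C i) (η i)) x = mval C η w := by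
  constructor
  · rintro ⟨p, ⟨⟨hp1, hp2⟩, hp3⟩, rfl⟩
    rw [suppVal_eq] at hp3
    have hge := theta_ge C η p.1 hp1 w
    exact ⟨hp1, le_antisymm (by linarith) hge⟩
  · rintro ⟨hx, heq⟩
    exact ⟨(x, infConv (Lam C) (fun i => lowerEnv (C i) (η i)) x), ⟨⟨hx, le_refl _⟩,
      by rw [suppVal_eq]; exact heq⟩, rfl⟩

/-- The set of minimizing tuples. -/
noncomputable def Fm (w : Fin n → ℝ) : Finset (IdxT C) :=
  @Finset.filter _ (fun A => dot w (sig A) + hgt η A = mval C η w) (Classical.decPred _)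
    Finset.univ

lemma mem_Fm {w : Fin n → ℝ} {A : IdxT C} :
    A ∈ Fm C η w ↔ dot w (sig A) + hgt η A = mval C η w := by
  rw [Fm, Finset.mem_filter]
  exact ⟨fun h => h.2, fun h => ⟨Finset.mem_univ _, h⟩⟩

lemma Fm_nonempty (w : Fin n → ℝ) : (Fm C η w).Nonempty := by
  obtain ⟨A, -, hA⟩ := Finset.exists_mem_eq_inf' (univ_nonempty)
    (fun A : IdxT C => dot w (sig A) + hgt η A)
  exact ⟨A, (mem_Fm C η).mpr hA.symm⟩

lemma mval_le (w : Fin n → ℝ) (A : IdxT C) : mval C η w ≤ dot w (sig A) + hgt η A :=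
  Finset.inf'_le _ (Finset.mem_univ _)

/-- The minimal positive gap. -/
noncomputable def gapv (w : Fin n → ℝ) : ℝ :=
  if h : (univ \ Fm C η w).Nonempty then
    (univ \ Fm C η w).inf' h (fun A => dot w (sig A) + hgt η A - mval C η w) else 1

lemma gapv_pos (w : Fin n → ℝ) : 0 < gapv C η w := by
  rw [gapv]
  split_ifs with h
  · rw [Finset.lt_inf'_iff]
    intro A hA
    rw [Finset.mem_sdiff] at hA
    have h1 := mval_le C η w A
    have h2 : dot w (sig A) + hgt η A ≠ mval C η w := fun hc => hA.2 ((mem_Fm C η).mpr hc)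
    have := lt_of_le_of_ne h1 (Ne.symm h2)
    linarith
  · exact one_pos

lemma gapv_spec (w : Fin n → ℝ) (A : IdxT C) (hA : A ∉ Fm C η w) :
    mval C η w + gapv C η w ≤ dot w (sig A) + hgt η A := by
  rw [gapv]
  have hmem : A ∈ univ \ Fm C η w := Finset.mem_sdiff.mpr ⟨Finset.mem_univ _, hA⟩
  rw [dif_pos ⟨A, hmem⟩]
  have := Finset.inf'_le (b := A)
    (f := fun A => dot w (sig A) + hgt η A - mval C η w) hmem
  linarith

/-- The approximation lemma: a convex combination with small mass outside `F` is close to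
the hull of the points indexed by `F`. -/
lemma approx_lemma {ι V : Type*} [Fintype ι] [NormedAddCommGroup V] [NormedSpace ℝ V]
    (P : ι → ℝ) (hP0 : ∀ A, 0 ≤ P A) (hP1 : ∑ A, P A = 1)
    (g : ι → ℝ) (m γ δ R : ℝ) (F : Finset ι) (A₀ : ι) (hA₀ : A₀ ∈ F)
    (hm : ∀ A, m ≤ g A) (hγ : ∀ A ∉ F, m + γ ≤ g A) (hγpos : 0 < γ)
    (hval : ∑ A, P A * g A ≤ m + δ)
    (v : ι → V) (hR : ∀ A, ‖v A‖ ≤ R) :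
    ∃ p ∈ convexHull ℝ (v '' ↑F), ‖(∑ A, P A • v A) - p‖ ≤ 2 * R * (δ / γ) := by
  classical
  set q : ℝ := ∑ A ∈ univ.filter (fun A => ¬ A ∈ F), P A with hq
  have hq0 : 0 ≤ q := Finset.sum_nonneg fun A _ => hP0 A
  have hmass : (∑ A ∈ univ.filter (fun A => A ∈ F), P A) + q = 1 := by
    rw [hq, Finset.sum_filter_add_sum_filter_not, hP1]
  have hqδ : γ * q ≤ δ := by
    have hsplit : (∑ A ∈ univ.filter (fun A => A ∈ F), P A * g A) +
        ∑ A ∈ univ.filter (fun A => ¬ A ∈ F), P A * g A = ∑ A, P A * g A :=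
      Finset.sum_filter_add_sum_filter_not univ _ _
    have h1 : ∑ A ∈ univ.filter (fun A => A ∈ F), P A * m ≤
        ∑ A ∈ univ.filter (fun A => A ∈ F), P A * g A :=
      Finset.sum_le_sum fun A _ => mul_le_mul_of_nonneg_left (hm A) (hP0 A)
    have h2 : ∑ A ∈ univ.filter (fun A => ¬ A ∈ F), P A * (m + γ) ≤
        ∑ A ∈ univ.filter (fun A => ¬ A ∈ F), P A * g A := by
      apply Finset.sum_le_sum
      intro A hA
      exact mul_le_mul_of_nonneg_left (hγ A (by simpa using (Finset.mem_filter.mp hA).2))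
        (hP0 A)
    have h3 : ∑ A ∈ univ.filter (fun A => A ∈ F), P A * m =
        (∑ A ∈ univ.filter (fun A => A ∈ F), P A) * m := by rw [Finset.sum_mul]
    have h4 : ∑ A ∈ univ.filter (fun A => ¬ A ∈ F), P A * (m + γ) = q * (m + γ) := by
      rw [hq, Finset.sum_mul]
    have h5 : ∑ A ∈ univ.filter (fun A => A ∈ F), P A = 1 - q := by linarith
    have h7 : ∑ A ∈ univ.filter (fun A => A ∈ F), P A * m = (1 - q) * m := by
      rw [h3, h5]
    have h6 : (1 - q) * m + q * (m + γ) = m + q * γ := by ring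
    nlinarith [hval, hsplit, h1, h2, h4, h7, h6]
  have hqdg : q ≤ δ / γ := (le_div_iff₀ hγpos).mpr (by linarith)
  have hR0 : 0 ≤ R := le_trans (norm_nonneg (v A₀)) (hR A₀)
  set p : V := (∑ A ∈ univ.filter (fun A => A ∈ F), P A • v A) + q • v A₀ with hp
  have hFfilter : univ.filter (fun A => A ∈ F) = F := by ext A; simp
  have hpK : p ∈ convexHull ℝ (v '' ↑F) := by
    have hsum2 : ∑ A ∈ F, (if A = A₀ then q else 0) • v A = q • v A₀ := by
      rw [Finset.sum_congr rfl (fun A _ => by rw [ite_smul, zero_smul])]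
      rw [Finset.sum_ite_eq' F A₀ (fun A => q • v A), if_pos hA₀]
    have hw1 : ∑ A ∈ F, (P A + if A = A₀ then q else 0) = 1 := by
      rw [Finset.sum_add_distrib, Finset.sum_ite_eq' F A₀ (fun _ => q), if_pos hA₀]
      have hm2 := hmass
      rw [hFfilter] at hm2
      linarith
    have hcomb := (convex_convexHull ℝ (v '' ↑F)).sum_mem
      (fun A _ => add_nonneg (hP0 A) (by split_ifs; exacts [hq0, le_rfl])) hw1
      (fun A hA => subset_convexHull ℝ _ (Set.mem_image_of_mem v (Finset.mem_coe.mpr hA)))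
    have hfin : ∑ A ∈ F, (P A + if A = A₀ then q else 0) • v A = p := by
      rw [Finset.sum_congr rfl (fun A _ => add_smul _ _ _), Finset.sum_add_distrib, hsum2,
        hp, hFfilter]
    rwa [hfin] at hcomb
  refine ⟨p, hpK, ?_⟩
  have hdiff : (∑ A, P A • v A) - p =
      (∑ A ∈ univ.filter (fun A => ¬ A ∈ F), P A • v A) - q • v A₀ := by
    rw [hp, ← Finset.sum_filter_add_sum_filter_not univ (fun A => A ∈ F)
      (fun A => P A • v A)]
    abel
  rw [hdiff]
  have h1 : ‖∑ A ∈ univ.filter (fun A => ¬ A ∈ F), P A • v A‖ ≤ q * R := by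
    calc ‖∑ A ∈ univ.filter (fun A => ¬ A ∈ F), P A • v A‖
        ≤ ∑ A ∈ univ.filter (fun A => ¬ A ∈ F), ‖P A • v A‖ := norm_sum_le _ _
      _ ≤ ∑ A ∈ univ.filter (fun A => ¬ A ∈ F), P A * R := by
          apply Finset.sum_le_sum
          intro A _
          rw [norm_smul, Real.norm_eq_abs, abs_of_nonneg (hP0 A)]
          exact mul_le_mul_of_nonneg_left (hR A) (hP0 A)
      _ = q * R := by rw [hq, Finset.sum_mul]
  have h2 : ‖q • v A₀‖ ≤ q * R := by
    rw [norm_smul, Real.norm_eq_abs, abs_of_nonneg hq0]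
    exact mul_le_mul_of_nonneg_left (hR A₀) hq0
  calc ‖(∑ A ∈ univ.filter (fun A => ¬ A ∈ F), P A • v A) - q • v A₀‖
      ≤ ‖∑ A ∈ univ.filter (fun A => ¬ A ∈ F), P A • v A‖ + ‖q • v A₀‖ := norm_sub_le _ _
    _ ≤ q * R + q * R := add_le_add h1 h2
    _ ≤ 2 * R * (δ / γ) := by nlinarith

end Chunk4

section Chunk5

open Finset

variable {n s : ℕ}
variable (C : Fin s → Finset (Fin n → ℤ)) [∀ i, Nonempty {a // a ∈ C i}]
variable (η : ∀ i : Fin s, {a // a ∈ C i} → ℝ)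

lemma hull_of_approx (w : Fin n → ℝ) (v : IdxT C → Fin n → ℝ) (z : Fin n → ℝ)
    (hz : ∀ δ : ℝ, 0 < δ → ∃ P : IdxT C → ℝ, (∀ A, 0 ≤ P A) ∧ ∑ A, P A = 1 ∧
      (∑ A, P A * (dot w (sig A) + hgt η A)) < mval C η w + δ ∧ ∑ A, P A • v A = z) :
    z ∈ convexHull ℝ (v '' ↑(Fm C η w)) := by
  classical
  set K := convexHull ℝ (v '' ↑(Fm C η w)) with hK
  have hKclosed : IsClosed K := by
    rw [hK]
    exact Set.Finite.isClosed_convexHull (𝕜 := ℝ)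
      ((Set.toFinite (↑(Fm C η w) : Set (IdxT C))).image v)
  show z ∈ K
  rw [← hKclosed.closure_eq, Metric.mem_closure_iff]
  intro ε hε
  set γ := gapv C η w with hγ
  have hγpos := gapv_pos C η w
  set R : ℝ := (univ.sup' univ_nonempty (fun A : IdxT C => ‖v A‖)) + 1 with hR
  have hRpos : 0 < R := by
    have h := le_trans (norm_nonneg (v (Classical.arbitrary _)))
      (Finset.le_sup' (fun A : IdxT C => ‖v A‖) (mem_univ (Classical.arbitrary _)))
    rw [hR]
    linarith
  have hRB : ∀ A, ‖v A‖ ≤ R := by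
    intro A
    have := Finset.le_sup' (fun A : IdxT C => ‖v A‖) (mem_univ A)
    rw [hR]
    linarith
  set δ : ℝ := γ * ε / (4 * R) with hδ
  have hδpos : 0 < δ := by
    rw [hδ]
    positivity
  obtain ⟨P, hP0, hP1, hPval, hPz⟩ := hz δ hδpos
  obtain ⟨A₀, hA₀⟩ := Fm_nonempty C η w
  obtain ⟨p, hpK, hdist⟩ := approx_lemma P hP0 hP1
    (fun A => dot w (sig A) + hgt η A) (mval C η w) γ δ R (Fm C η w) A₀ hA₀
    (mval_le C η w) (fun A hA => gapv_spec C η w A hA) hγpos hPval.le v hRB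
  refine ⟨p, hpK, ?_⟩
  rw [hPz] at hdist
  have hcalc : 2 * R * (δ / γ) = ε / 2 := by
    have hγne : γ ≠ 0 := hγpos.ne'
    rw [hδ]
    field_simp
    ring
  rw [dist_eq_norm]
  calc ‖z - p‖ ≤ 2 * R * (δ / γ) := hdist
    _ = ε / 2 := hcalc
    _ < ε := by linarith

lemma cell_subset_hull (w : Fin n → ℝ) :
    cell (∑ i, Lam C i) (infConv (Lam C) (fun i => lowerEnv (C i) (η i))) w ⊆
      convexHull ℝ (sig '' (↑(Fm C η w) : Set (IdxT C))) := by
  intro x hx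
  rw [cell_mem_iff] at hx
  obtain ⟨hxΛ, hxval⟩ := hx
  apply hull_of_approx
  intro δ hδ
  have hne : Set.Nonempty {t | ∃ y : Fin s → Fin n → ℝ, (∀ i, y i ∈ Lam C i) ∧
      (∑ i, y i) = x ∧ (∑ i, lowerEnv (C i) (η i) (y i)) = t} := by
    obtain ⟨y, hy, hsum⟩ := (mem_finsetSum_sets univ (Lam C) x).mp hxΛ
    exact ⟨_, y, fun i => hy i (mem_univ i), hsum, rfl⟩
  have hlt : sInf {t | ∃ y : Fin s → Fin n → ℝ, (∀ i, y i ∈ Lam C i) ∧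
      (∑ i, y i) = x ∧ (∑ i, lowerEnv (C i) (η i) (y i)) = t} <
      infConv (Lam C) (fun i => lowerEnv (C i) (η i)) x + δ := by
    show infConv (Lam C) (fun i => lowerEnv (C i) (η i)) x < _
    linarith
  obtain ⟨t, ⟨y, hy, hysum, hyval⟩, htlt⟩ := exists_lt_of_csInf_lt hne hlt
  obtain ⟨P, h0, h1, hval, hmarg⟩ := core_weights C η w x δ hδ y hy hysum
    (by rw [hyval]; linarith)
  refine ⟨P, h0, h1, hval, ?_⟩
  calc ∑ A, P A • sig A = ∑ A : IdxT C, ∑ i, P A • castZ ((A i : Fin n → ℤ)) := by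
        apply Finset.sum_congr rfl
        intro A _
        rw [sig, Finset.smul_sum]
    _ = ∑ i, ∑ A : IdxT C, P A • castZ ((A i : Fin n → ℤ)) := Finset.sum_comm
    _ = ∑ i, y i := by
        apply Finset.sum_congr rfl
        intro i _
        exact hmarg i
    _ = x := hysum

lemma comp_subset_hull (w : Fin n → ℝ) (i : Fin s) :
    comp (Lam C) (fun i => lowerEnv (C i) (η i))
      (cell (∑ j, Lam C j) (infConv (Lam C) (fun i => lowerEnv (C i) (η i))) w) i ⊆
      convexHull ℝ ((fun A : IdxT C => castZ ((A i : Fin n → ℤ))) '' ↑(Fm C η w)) := by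
  rintro z ⟨y, ⟨hy, hycell, hyval⟩, rfl⟩
  rw [cell_mem_iff] at hycell
  obtain ⟨hxΛ, hxval⟩ := hycell
  apply hull_of_approx
  intro δ hδ
  obtain ⟨P, h0, h1, hval, hmarg⟩ := core_weights C η w (∑ j, y j) δ hδ y hy rfl
    (by rw [← hyval]; linarith)
  exact ⟨P, h0, h1, hval, hmarg i⟩

lemma hull_to_cell_and_comp (w : Fin n → ℝ) (μ : IdxT C → ℝ) (h0 : ∀ A, 0 ≤ μ A)
    (h1 : ∑ A, μ A = 1) (hsupp : ∀ A, A ∉ Fm C η w → μ A = 0) :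
    (∑ A, μ A • sig A) ∈
        cell (∑ i, Lam C i) (infConv (Lam C) (fun i => lowerEnv (C i) (η i))) w ∧
      ∀ i, (∑ A : IdxT C, μ A • castZ ((A i : Fin n → ℤ))) ∈
        comp (Lam C) (fun i => lowerEnv (C i) (η i))
          (cell (∑ j, Lam C j) (infConv (Lam C) (fun i => lowerEnv (C i) (η i))) w) i := by
  classical
  set x := ∑ A, μ A • sig A with hx
  set y : Fin s → Fin n → ℝ := fun j => ∑ A : IdxT C, μ A • castZ ((A j : Fin n → ℤ)) with hy
  have hyLam : ∀ j, y j ∈ Lam C j := by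
    intro j
    rw [Lam, hull_eq_range]
    exact (convex_convexHull ℝ _).sum_mem (fun A _ => h0 A) h1
      (fun A _ => subset_convexHull ℝ _ ⟨A j, rfl⟩)
  have hysum : ∑ j, y j = x := by
    rw [hy, hx, Finset.sum_comm]
    apply Finset.sum_congr rfl
    intro A _
    rw [sig, Finset.smul_sum]
  have hxΛ : x ∈ ∑ i, Lam C i :=
    (mem_finsetSum_sets univ (Lam C) x).mpr ⟨y, fun j _ => hyLam j, hysum⟩
  have hμg : ∑ A, μ A * (dot w (sig A) + hgt η A) = mval C η w := by
    rw [← Finset.sum_filter_add_sum_filter_not univ (fun A => A ∈ Fm C η w)]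
    have hrest : ∑ A ∈ univ.filter (fun A => ¬ A ∈ Fm C η w),
        μ A * (dot w (sig A) + hgt η A) = 0 := by
      apply Finset.sum_eq_zero
      intro A hA
      rw [hsupp A (by simpa using (Finset.mem_filter.mp hA).2), zero_mul]
    have hmain : ∑ A ∈ univ.filter (fun A => A ∈ Fm C η w),
        μ A * (dot w (sig A) + hgt η A) =
        ∑ A ∈ univ.filter (fun A => A ∈ Fm C η w), μ A * mval C η w := by
      apply Finset.sum_congr rfl
      intro A hA
      rw [(mem_Fm C η).mp (Finset.mem_filter.mp hA).2]
    have hmass : ∑ A ∈ univ.filter (fun A => A ∈ Fm C η w), μ A = 1 := by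
      have := Finset.sum_filter_add_sum_filter_not univ (fun A => A ∈ Fm C η w) μ
      have hz : ∑ A ∈ univ.filter (fun A => ¬ A ∈ Fm C η w), μ A = 0 := by
        apply Finset.sum_eq_zero
        intro A hA
        exact hsupp A (by simpa using (Finset.mem_filter.mp hA).2)
      rw [hz] at this
      rw [← h1, ← this, add_zero]
    rw [hrest, hmain, ← Finset.sum_mul, hmass, one_mul, add_zero]
  have hdotx : ∑ A, μ A * dot w (sig A) = dot w x := by
    rw [hx, dot_smul_sum]
  have hsplit : ∑ A, μ A * (dot w (sig A) + hgt η A) =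
      (∑ A, μ A * dot w (sig A)) + ∑ A, μ A * hgt η A := by
    rw [← Finset.sum_add_distrib]
    apply Finset.sum_congr rfl
    intro A _
    ring
  have hhgt : ∑ A, μ A * hgt η A = mval C η w - dot w x := by
    rw [← hdotx]
    linarith [hμg, hsplit]
  have hθle : infConv (Lam C) (fun i => lowerEnv (C i) (η i)) x ≤ mval C η w - dot w x := by
    have h := theta_le C η (fun A : IdxT C => A) μ h0 h1
    rw [hhgt] at h
    exact h
  have hθge := theta_ge C η x hxΛ w
  have hθeq : dot w x + infConv (Lam C) (fun i => lowerEnv (C i) (η i)) x = mval C η w :=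
    le_antisymm (by linarith) hθge
  have hψle : ∀ j, lowerEnv (C j) (η j) (y j) ≤ ∑ A : IdxT C, μ A * η j (A j) := fun j =>
    lowerEnv_le (C j) (η j) (fun A : IdxT C => A j) μ h0 h1
  have hψsum : ∑ j, lowerEnv (C j) (η j) (y j) ≤ mval C η w - dot w x := by
    calc ∑ j, lowerEnv (C j) (η j) (y j) ≤ ∑ j, ∑ A : IdxT C, μ A * η j (A j) :=
          Finset.sum_le_sum fun j _ => hψle j
      _ = ∑ A, μ A * hgt η A := by
          rw [Finset.sum_comm]
          apply Finset.sum_congr rfl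
          intro A _
          rw [hgt, Finset.mul_sum]
      _ = mval C η w - dot w x := hhgt
  have hθel : infConv (Lam C) (fun i => lowerEnv (C i) (η i)) x ≤
      ∑ j, lowerEnv (C j) (η j) (y j) :=
    csInf_le (theta_bddBelow C η x) ⟨y, hyLam, hysum, rfl⟩
  have hψeq : infConv (Lam C) (fun i => lowerEnv (C i) (η i)) x =
      ∑ j, lowerEnv (C j) (η j) (y j) :=
    le_antisymm hθel (by linarith)
  constructor
  · rw [cell_mem_iff]
    exact ⟨hxΛ, hθeq⟩
  · intro i
    refine ⟨y, ⟨hyLam, ?_, ?_⟩, rfl⟩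
    · rw [hysum, cell_mem_iff]
      exact ⟨hxΛ, hθeq⟩
    · rw [hysum]
      exact hψeq

end Chunk5

/-- Small perturbations of a lifting vector produce finer mixed subdivisions: there is a
neighborhood `U` of `ν` such that for all `ν̃ ∈ U`, every cell of `S(Θ_ν̃)` together with
all its components is contained in some cell of `S(Θ_ν)` and its corresponding
components. -/

theorem stmt14 {n s : ℕ} (C : Fin s → Finset (Fin n → ℤ)) (hC : ∀ i, (C i).Nonempty)
    (ν : ∀ i : Fin s, {a // a ∈ C i} → ℝ) :
    ∃ ε > (0 : ℝ), ∀ ν' : ∀ i : Fin s, {a // a ∈ C i} → ℝ,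
      (∀ i a, |ν' i a - ν i a| < ε) →
      ∀ w : Fin n → ℝ, ∃ w' : Fin n → ℝ,
        cell (∑ i, convexHull ℝ (castZ '' ↑(C i)))
            (infConv (fun i => convexHull ℝ (castZ '' ↑(C i)))
              (fun i => lowerEnv (C i) (ν' i))) w
          ⊆ cell (∑ i, convexHull ℝ (castZ '' ↑(C i)))
            (infConv (fun i => convexHull ℝ (castZ '' ↑(C i)))
              (fun i => lowerEnv (C i) (ν i))) w' ∧
        ∀ i, comp (fun i => convexHull ℝ (castZ '' ↑(C i)))
              (fun i => lowerEnv (C i) (ν' i))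
              (cell (∑ i, convexHull ℝ (castZ '' ↑(C i)))
                (infConv (fun i => convexHull ℝ (castZ '' ↑(C i)))
                  (fun i => lowerEnv (C i) (ν' i))) w) i
            ⊆ comp (fun i => convexHull ℝ (castZ '' ↑(C i)))
              (fun i => lowerEnv (C i) (ν i))
              (cell (∑ i, convexHull ℝ (castZ '' ↑(C i)))
                (infConv (fun i => convexHull ℝ (castZ '' ↑(C i)))
                  (fun i => lowerEnv (C i) (ν i))) w') i := by
  classical
  haveI : ∀ i, Nonempty {a // a ∈ C i} := fun i => ⟨⟨(hC i).choose, (hC i).choose_spec⟩⟩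
  obtain ⟨ε₀, hε₀, hgood⟩ := exists_good_eps (n := n) (ι := IdxT C) sig (hgt ν)
  have hs1 : (0:ℝ) < (s:ℝ) + 1 := by positivity
  refine ⟨ε₀ / ((s:ℝ) + 1), by positivity, ?_⟩
  intro ν' hν' w
  have hhgt : ∀ A : IdxT C, |hgt ν' A - hgt ν A| < ε₀ := by
    intro A
    have h1 : |hgt ν' A - hgt ν A| ≤ ∑ i, |ν' i (A i) - ν i (A i)| := by
      rw [hgt, hgt, ← Finset.sum_sub_distrib]
      exact Finset.abs_sum_le_sum_abs _ _
    have h2 : ∑ i, |ν' i (A i) - ν i (A i)| ≤ (s:ℝ) * (ε₀ / ((s:ℝ)+1)) := by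
      calc ∑ i, |ν' i (A i) - ν i (A i)| ≤ ∑ _i : Fin s, ε₀/((s:ℝ)+1) :=
            Finset.sum_le_sum fun i _ => (hν' i (A i)).le
        _ = (s:ℝ) * (ε₀/((s:ℝ)+1)) := by
            rw [Finset.sum_const, Finset.card_univ, Fintype.card_fin, nsmul_eq_mul]
    have h3 : (s:ℝ) * (ε₀ / ((s:ℝ)+1)) < ε₀ := by
      rw [mul_div_assoc', div_lt_iff₀ hs1]
      nlinarith
    linarith
  obtain ⟨w', hw'⟩ := hgood (hgt ν') hhgt w
  have hFm : Fm C ν' w ⊆ Fm C ν w' := by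
    intro A hA
    rw [mem_Fm] at hA ⊢
    have hmin' : ∀ B, dot w (sig A) + hgt ν' A ≤ dot w (sig B) + hgt ν' B := by
      intro B
      rw [hA]
      exact mval_le C ν' w B
    have hmin := hw' A hmin'
    refine le_antisymm ?_ (mval_le C ν w' A)
    exact Finset.le_inf' _ _ fun B _ => hmin B
  refine ⟨w', ?_, ?_⟩
  · intro x hx
    have h1 : x ∈ convexHull ℝ (sig '' (↑(Fm C ν' w) : Set (IdxT C))) :=
      cell_subset_hull C ν' w hx
    obtain ⟨μ, h0, hsupp, h1', h2⟩ := ext_hull_finset sig (Fm C ν' w)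
      (Fm_nonempty C ν' w) x h1
    have hsupp' : ∀ A, A ∉ Fm C ν w' → μ A = 0 := fun A hA =>
      hsupp A (fun hmem => hA (hFm hmem))
    have hres := (hull_to_cell_and_comp C ν w' μ h0 h1' hsupp').1
    rw [h2] at hres
    exact hres
  · intro i z hz
    have h1 := comp_subset_hull C ν' w i hz
    obtain ⟨μ, h0, hsupp, h1', h2⟩ := ext_hull_finset _ (Fm C ν' w)
      (Fm_nonempty C ν' w) z h1
    have hsupp' : ∀ A, A ∉ Fm C ν w' → μ A = 0 := fun A hA =>
      hsupp A (fun hmem => hA (hFm hmem))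
    have hres := (hull_to_cell_and_comp C ν w' μ h0 h1' hsupp').2 i
    rw [h2] at hres
    exact hres
end
end

section
/- Let ρ_i : Δ_i → ℝ, i = 0,…,n, be convex piecewise affine functions with inf-convolution ρ on Δ = Σ_i Δ_i, and suppose S(ρ) is tight. Let φ_i : Δ_i → ℝ be further convex piecewise affine functions with inf-convolution φ such that S(φ) ⪯ S(ρ). For each n-cell D of S(φ) with components D_0,…,D_n: (a) the inf-convolution of the restrictions ρ_i|_{D_i} equals ρ|_D; (b) the mixed subdivision of D induced by the ρ_i|_{D_i} is tight. -/
open Pointwise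

noncomputable section

/-!
Cells of an inf-convolution of continuous functions on compact sets are the sets of minimizers
of `⟨v, ·⟩ + ρ`; they are the Minkowski sums of the corresponding minimizer sets of the summands,
and these are the components.

(a) At an interior point `x` of the `n`-cell `D`, a subgradient of the convex function `ρ` puts
`x` into a cell of `S(ρ)`. An optimal decomposition of `x` for `ρ` has its entries in the
components of that cell, hence in those of a cell of `S(φ)`; so it is optimal for `φ` as well and
lies in the components `D_i`. The restricted inf-convolution is lower semicontinuous and `ρ` is
convex, so the equality extends from the interior to all of `D`.

(b) An `n`-cell `C` of the subdivision of `D` has an interior point, which lies in a cell `C'` of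
`S(ρ)`. By (a), `⟨v, ·⟩ + ρ` is constant on `C`, so the difference of the two slopes is a linear
form with an interior minimum on `C`; it vanishes and `C ⊆ C'`. Hence `C'` is an `n`-cell and
`n = dim C ≤ Σ dim C_i ≤ Σ dim C'_i = n` by tightness of `S(ρ)`.
-/

section Minimizers

variable {n : ℕ}

lemma dot_eq_dotProduct (v x : Fin n → ℝ) : dot v x = v ⬝ᵥ x := rfl

lemma IsCPA.continuousOn {Λ : Set (Fin n → ℝ)} {ψ : (Fin n → ℝ) → ℝ} (h : IsCPA Λ ψ) :
    ContinuousOn ψ Λ := by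
  obtain ⟨F, hF, hψ⟩ := h
  refine (Continuous.continuousOn ?_).congr hψ
  exact Continuous.finset_sup'_apply hF fun p _ =>
    (continuous_const.dotProduct continuous_id).add continuous_const

lemma IsCPA.convexOn {Λ : Set (Fin n → ℝ)} {ψ : (Fin n → ℝ) → ℝ} (hΛ : Convex ℝ Λ)
    (h : IsCPA Λ ψ) : ConvexOn ℝ Λ ψ := by
  obtain ⟨F, hF, hψ⟩ := h
  refine ⟨hΛ, fun x hx y hy a b ha hb hab => ?_⟩
  rw [hψ x hx, hψ y hy, hψ _ (hΛ hx hy ha hb hab)]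
  refine Finset.sup'_le _ _ fun p hp => ?_
  calc dot p.1 (a • x + b • y) + p.2 = a * (dot p.1 x + p.2) + b * (dot p.1 y + p.2) := by
        simp only [dot_eq_dotProduct, dotProduct_add, dotProduct_smul, smul_eq_mul]
        linear_combination p.2 * hab.symm
    _ ≤ _ := by
        simp only [smul_eq_mul]
        gcongr <;> exact Finset.le_sup' (fun p => dot p.1 _ + p.2) hp

/-- Unlike `cell`, this does not go through `sInf`; the two agree as soon as the minimum is
attained (`cell_eq_minimizers`). -/
def minimizers (Λ : Set (Fin n → ℝ)) (ψ : (Fin n → ℝ) → ℝ) (v : Fin n → ℝ) :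
    Set (Fin n → ℝ) :=
  {x | x ∈ Λ ∧ ∀ y ∈ Λ, dot v x + ψ x ≤ dot v y + ψ y}

variable {Λ : Set (Fin n → ℝ)} {ψ : (Fin n → ℝ) → ℝ}

lemma minimizers_subset (v : Fin n → ℝ) : minimizers Λ ψ v ⊆ Λ := fun _ hx => hx.1

lemma minimizers_nonempty (hK : IsCompact Λ) (hne : Λ.Nonempty) (hψ : ContinuousOn ψ Λ)
    (v : Fin n → ℝ) : (minimizers Λ ψ v).Nonempty := by
  obtain ⟨x, hx, hmin⟩ :=
    hK.exists_isMinOn hne ((continuous_const.dotProduct continuous_id).continuousOn.add hψ)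
  exact ⟨x, hx, fun y hy => hmin hy⟩

lemma minimizers_eq_sublevel {v x₀ : Fin n → ℝ} (hx₀ : x₀ ∈ minimizers Λ ψ v) :
    minimizers Λ ψ v = {x ∈ Λ | dot v x + ψ x ≤ dot v x₀ + ψ x₀} := by
  ext x
  refine ⟨fun hx => ⟨hx.1, hx.2 x₀ hx₀.1⟩, fun hx => ⟨hx.1, fun y hy => ?_⟩⟩
  exact hx.2.trans (hx₀.2 y hy)

lemma isCompact_minimizers (hK : IsCompact Λ) (hψ : ContinuousOn ψ Λ) (v : Fin n → ℝ) :
    IsCompact (minimizers Λ ψ v) := by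
  rcases (minimizers Λ ψ v).eq_empty_or_nonempty with h | ⟨x₀, hx₀⟩
  · exact h ▸ isCompact_empty
  rw [minimizers_eq_sublevel hx₀]
  exact hK.of_isClosed_subset (((continuous_const.dotProduct continuous_id).continuousOn.add
    hψ).preimage_isClosed_of_isClosed hK.isClosed isClosed_Iic) (Set.sep_subset _ _)

lemma convex_minimizers (hψ : ConvexOn ℝ Λ ψ) (v : Fin n → ℝ) :
    Convex ℝ (minimizers Λ ψ v) := by
  rcases (minimizers Λ ψ v).eq_empty_or_nonempty with h | ⟨x₀, hx₀⟩
  · exact h ▸ convex_empty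
  rw [minimizers_eq_sublevel hx₀]
  exact (((dotProductBilin ℝ ℝ v).convexOn hψ.1).add hψ).convex_le _

lemma cell_subset (Λ : Set (Fin n → ℝ)) (ψ : (Fin n → ℝ) → ℝ) (v : Fin n → ℝ) :
    cell Λ ψ v ⊆ Λ := by
  rintro _ ⟨p, ⟨hp, -⟩, rfl⟩
  exact hp.1

lemma cell_eq_minimizers {v : Fin n → ℝ} (h : (minimizers Λ ψ v).Nonempty) :
    cell Λ ψ v = minimizers Λ ψ v := by
  obtain ⟨x₀, hx₀⟩ := h
  have hsupp : suppVal (epigraph Λ ψ) v = dot v x₀ + ψ x₀ := by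
    refine IsLeast.csInf_eq ⟨⟨(x₀, ψ x₀), ⟨hx₀.1, le_rfl⟩, rfl⟩, ?_⟩
    rintro t ⟨⟨x, z⟩, ⟨hx, hz⟩, rfl⟩
    linarith [hx₀.2 x hx]
  ext x
  constructor
  · rintro ⟨⟨x, z⟩, ⟨⟨hx, hz⟩, heq⟩, rfl⟩
    refine ⟨hx, fun y hy => ?_⟩
    dsimp only at heq hz ⊢
    linarith [hx₀.2 y hy, hx₀.2 x hx]
  · intro hx
    refine ⟨(x, ψ x), ⟨⟨hx.1, le_rfl⟩, ?_⟩, rfl⟩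
    rw [hsupp]
    exact le_antisymm (hx.2 x₀ hx₀.1) (hx₀.2 x hx.1)

end Minimizers

section Dimension

lemma dimAff_mono {V : Type*} [AddCommGroup V] [Module ℝ V] [FiniteDimensional ℝ V]
    {S T : Set V} (h : S ⊆ T) : dimAff S ≤ dimAff T :=
  Submodule.finrank_mono (AffineSubspace.direction_le (affineSpan_mono ℝ h))

lemma dimAff_add_le {V : Type*} [AddCommGroup V] [Module ℝ V] [FiniteDimensional ℝ V]
    (A B : Set V) : dimAff (A + B) ≤ dimAff A + dimAff B := by
  unfold dimAff
  rw [direction_affineSpan, direction_affineSpan, direction_affineSpan]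
  refine (Submodule.finrank_mono ?_).trans
    (Submodule.finrank_add_le_finrank_add_finrank (vectorSpan ℝ A) (vectorSpan ℝ B))
  refine Submodule.span_le.mpr ?_
  rintro _ ⟨_, ⟨a, ha, b, hb, rfl⟩, _, ⟨a', ha', b', hb', rfl⟩, rfl⟩
  show a + b -ᵥ (a' + b') ∈ _
  rw [show a + b -ᵥ (a' + b') = (a -ᵥ a') + (b -ᵥ b') by simp only [vsub_eq_sub]; abel]
  exact Submodule.add_mem _ (Submodule.mem_sup_left (vsub_mem_vectorSpan ℝ ha ha'))
    (Submodule.mem_sup_right (vsub_mem_vectorSpan ℝ hb hb'))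

lemma dimAff_sum_le {V ι : Type*} [AddCommGroup V] [Module ℝ V] [FiniteDimensional ℝ V]
    (t : Finset ι) (A : ι → Set V) : dimAff (∑ i ∈ t, A i) ≤ ∑ i ∈ t, dimAff (A i) := by
  classical
  induction t using Finset.induction with
  | empty =>
    rw [Finset.sum_empty, Finset.sum_empty, ← Set.singleton_zero, dimAff, direction_affineSpan,
      vectorSpan_singleton, finrank_bot]
  | insert i t hi ih =>
    rw [Finset.sum_insert hi, Finset.sum_insert hi]
    exact (dimAff_add_le _ _).trans (by omega)

variable {n : ℕ}

lemma dimAff_le (S : Set (Fin n → ℝ)) : dimAff S ≤ n := by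
  simpa [dimAff] using Submodule.finrank_le (affineSpan ℝ S).direction

lemma interior_nonempty_of_dimAff_eq {S : Set (Fin n → ℝ)} (hconv : Convex ℝ S)
    (hne : S.Nonempty) (hdim : dimAff S = n) : (interior S).Nonempty := by
  rw [hconv.interior_nonempty_iff_affineSpan_eq_top]
  obtain ⟨x, hx⟩ := hne
  refine (AffineSubspace.direction_eq_top_iff_of_nonempty ⟨x, subset_affineSpan ℝ S hx⟩).mp ?_
  exact Submodule.eq_top_of_finrank_eq (by rw [Module.finrank_fin_fun]; exact hdim)

end Dimension

section InfConv

variable {n s : ℕ} {Λ : Fin s → Set (Fin n → ℝ)} {ψ : Fin s → (Fin n → ℝ) → ℝ}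

lemma dot_sum_add_sum (v : Fin n → ℝ) (y : Fin s → Fin n → ℝ) :
    dot v (∑ i, y i) + ∑ i, ψ i (y i) = ∑ i, (dot v (y i) + ψ i (y i)) := by
  simp only [dot_eq_dotProduct, dotProduct_sum, Finset.sum_add_distrib]

lemma continuousOn_sum_apply (hψ : ∀ i, ContinuousOn (ψ i) (Λ i)) :
    ContinuousOn (fun y : Fin s → Fin n → ℝ => ∑ i, ψ i (y i)) (Set.univ.pi Λ) :=
  continuousOn_finsetSum _ fun i _ => (hψ i).comp (continuous_apply i).continuousOn
    fun _ hy => hy i (Set.mem_univ i)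

section Compact

variable (hK : ∀ i, IsCompact (Λ i)) (hψ : ∀ i, ContinuousOn (ψ i) (Λ i))
include hK hψ

lemma isLeast_infConv {x : Fin n → ℝ} (hx : x ∈ ∑ i, Λ i) :
    IsLeast {t | ∃ y : Fin s → Fin n → ℝ,
      (∀ i, y i ∈ Λ i) ∧ (∑ i, y i) = x ∧ (∑ i, ψ i (y i)) = t} (infConv Λ ψ x) := by
  obtain ⟨g, hg, hgx⟩ := (Set.mem_fintype_sum _ _).mp hx
  let K : Set (Fin s → Fin n → ℝ) := Set.univ.pi Λ ∩ {y | ∑ i, y i = x}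
  have hKc : IsCompact K := (isCompact_univ_pi hK).inter_right
    (isClosed_eq (continuous_finsetSum _ fun i _ => continuous_apply i) continuous_const)
  obtain ⟨y, hyK, hmin⟩ := hKc.exists_isMinOn ⟨g, fun i _ => hg i, hgx⟩
    ((continuousOn_sum_apply hψ).mono Set.inter_subset_left)
  have hleast : IsLeast {t | ∃ y : Fin s → Fin n → ℝ,
      (∀ i, y i ∈ Λ i) ∧ (∑ i, y i) = x ∧ (∑ i, ψ i (y i)) = t} (∑ i, ψ i (y i)) := by
    refine ⟨⟨y, fun i => hyK.1 i (Set.mem_univ i), hyK.2, rfl⟩, ?_⟩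
    rintro t ⟨y', hy', hsum', rfl⟩
    exact hmin ⟨fun i _ => hy' i, hsum'⟩
  rwa [infConv, hleast.csInf_eq]

lemma infConv_le_sum {y : Fin s → Fin n → ℝ} (hy : ∀ i, y i ∈ Λ i) :
    infConv Λ ψ (∑ i, y i) ≤ ∑ i, ψ i (y i) :=
  (isLeast_infConv hK hψ (Set.finsetSum_mem_finsetSum _ _ _ fun i _ => hy i)).2 ⟨y, hy, rfl, rfl⟩

lemma exists_sum_eq_infConv {x : Fin n → ℝ} (hx : x ∈ ∑ i, Λ i) :
    ∃ y : Fin s → Fin n → ℝ, (∀ i, y i ∈ Λ i) ∧ ∑ i, y i = x ∧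
      ∑ i, ψ i (y i) = infConv Λ ψ x :=
  (isLeast_infConv hK hψ hx).1

lemma convexOn_infConv (hconv : ∀ i, ConvexOn ℝ (Λ i) (ψ i)) :
    ConvexOn ℝ (∑ i, Λ i) (infConv Λ ψ) := by
  refine ⟨convex_sum _ fun i _ => (hconv i).1, fun x hx x' hx' α β hα hβ hαβ => ?_⟩
  obtain ⟨y, hy, rfl, hval⟩ := exists_sum_eq_infConv hK hψ hx
  obtain ⟨y', hy', rfl, hval'⟩ := exists_sum_eq_infConv hK hψ hx'
  have hcombo : ∀ i, α • y i + β • y' i ∈ Λ i := fun i => (hconv i).1 (hy i) (hy' i) hα hβ hαβ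
  calc infConv Λ ψ (α • ∑ i, y i + β • ∑ i, y' i)
      = infConv Λ ψ (∑ i, (α • y i + β • y' i)) := by
        rw [Finset.sum_add_distrib, Finset.smul_sum, Finset.smul_sum]
    _ ≤ ∑ i, ψ i (α • y i + β • y' i) := infConv_le_sum hK hψ hcombo
    _ ≤ ∑ i, (α • ψ i (y i) + β • ψ i (y' i)) :=
        Finset.sum_le_sum fun i _ => (hconv i).2 (hy i) (hy' i) hα hβ hαβ
    _ = α • infConv Λ ψ (∑ i, y i) + β • infConv Λ ψ (∑ i, y' i) := by
        rw [← hval, ← hval', Finset.sum_add_distrib, Finset.smul_sum, Finset.smul_sum]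

lemma lowerSemicontinuousOn_infConv : LowerSemicontinuousOn (infConv Λ ψ) (∑ i, Λ i) := by
  refine lowerSemicontinuousOn_iff_preimage_Iic.mpr fun b => ?_
  let T : Set (Fin s → Fin n → ℝ) := Set.univ.pi Λ ∩ {y | ∑ i, ψ i (y i) ≤ b}
  have hT : IsCompact T := (isCompact_univ_pi hK).of_isClosed_subset
    ((continuousOn_sum_apply hψ).preimage_isClosed_of_isClosed
        (isCompact_univ_pi hK).isClosed isClosed_Iic) Set.inter_subset_left
  refine ⟨(fun y => ∑ i, y i) '' T,
    (hT.image (continuous_finsetSum _ fun i _ => continuous_apply i)).isClosed, ?_⟩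
  ext x
  constructor
  · rintro ⟨hx, hxb⟩
    obtain ⟨y, hy, rfl, hval⟩ := exists_sum_eq_infConv hK hψ hx
    exact ⟨hx, y, ⟨fun i _ => hy i, hval.trans_le hxb⟩, rfl⟩
  · rintro ⟨hx, y, ⟨hy, hyb⟩, rfl⟩
    exact ⟨hx, (infConv_le_sum hK hψ fun i => hy i (Set.mem_univ i)).trans hyb⟩

variable {v : Fin n → ℝ} {a : Fin s → Fin n → ℝ}
  (ha : ∀ i, a i ∈ minimizers (Λ i) (ψ i) v)
include ha

lemma sum_minimizers_le {x : Fin n → ℝ} (hx : x ∈ ∑ i, Λ i) :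
    ∑ i, (dot v (a i) + ψ i (a i)) ≤ dot v x + infConv Λ ψ x := by
  obtain ⟨y, hy, rfl, hval⟩ := exists_sum_eq_infConv hK hψ hx
  rw [← hval, dot_sum_add_sum]
  exact Finset.sum_le_sum fun i _ => (ha i).2 (y i) (hy i)

lemma infConv_sum_minimizers : infConv Λ ψ (∑ i, a i) = ∑ i, ψ i (a i) := by
  have hmem : ∑ i, a i ∈ ∑ i, Λ i := Set.finsetSum_mem_finsetSum _ _ _ fun i _ => (ha i).1
  refine le_antisymm (infConv_le_sum hK hψ fun i => (ha i).1) ?_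
  have := sum_minimizers_le hK hψ ha hmem
  rw [← dot_sum_add_sum] at this
  linarith

lemma sum_mem_minimizers_infConv : ∑ i, a i ∈ minimizers (∑ i, Λ i) (infConv Λ ψ) v := by
  refine ⟨Set.finsetSum_mem_finsetSum _ _ _ fun i _ => (ha i).1, fun x hx => ?_⟩
  rw [infConv_sum_minimizers hK hψ ha, dot_sum_add_sum]
  exact sum_minimizers_le hK hψ ha hx

lemma cell_infConv_eq_minimizers :
    cell (∑ i, Λ i) (infConv Λ ψ) v = minimizers (∑ i, Λ i) (infConv Λ ψ) v :=
  cell_eq_minimizers ⟨_, sum_mem_minimizers_infConv hK hψ ha⟩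

lemma mem_minimizers_of_infConv_eq {x : Fin n → ℝ} {y : Fin s → Fin n → ℝ}
    (hx : x ∈ minimizers (∑ i, Λ i) (infConv Λ ψ) v) (hy : ∀ i, y i ∈ Λ i)
    (hsum : ∑ i, y i = x) (hopt : infConv Λ ψ x = ∑ i, ψ i (y i)) (i : Fin s) :
    y i ∈ minimizers (Λ i) (ψ i) v := by
  have hle : ∀ j ∈ Finset.univ, dot v (a j) + ψ j (a j) ≤ dot v (y j) + ψ j (y j) :=
    fun j _ => (ha j).2 (y j) (hy j)
  have heq : ∑ j, (dot v (a j) + ψ j (a j)) = ∑ j, (dot v (y j) + ψ j (y j)) := by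
    have := hx.2 _ (sum_mem_minimizers_infConv hK hψ ha).1
    subst hsum
    rw [infConv_sum_minimizers hK hψ ha, dot_sum_add_sum, hopt, dot_sum_add_sum] at this
    exact le_antisymm (Finset.sum_le_sum hle) this
  refine ⟨hy i, fun z hz => ?_⟩
  rw [← (Finset.sum_eq_sum_iff_of_le hle).mp heq i (Finset.mem_univ i)]
  exact (ha i).2 z hz

lemma minimizers_infConv_eq_sum :
    minimizers (∑ i, Λ i) (infConv Λ ψ) v = ∑ i, minimizers (Λ i) (ψ i) v := by
  ext x
  refine ⟨fun hx => ?_, fun hx => ?_⟩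
  · obtain ⟨y, hy, hsum, hval⟩ := exists_sum_eq_infConv hK hψ hx.1
    exact (Set.mem_fintype_sum _ _).mpr
      ⟨y, mem_minimizers_of_infConv_eq hK hψ ha hx hy hsum hval.symm, hsum⟩
  · obtain ⟨y, hy, rfl⟩ := (Set.mem_fintype_sum _ _).mp hx
    exact sum_mem_minimizers_infConv hK hψ hy

lemma comp_cell_infConv (i : Fin s) :
    comp Λ ψ (cell (∑ i, Λ i) (infConv Λ ψ) v) i = minimizers (Λ i) (ψ i) v := by
  rw [cell_infConv_eq_minimizers hK hψ ha]
  ext b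
  constructor
  · rintro ⟨y, ⟨hy, hmem, hopt⟩, rfl⟩
    exact mem_minimizers_of_infConv_eq hK hψ ha hmem hy rfl hopt i
  · intro hb
    have hy : ∀ j, Function.update a i b j ∈ minimizers (Λ j) (ψ j) v := by
      intro j
      rcases eq_or_ne j i with rfl | hne
      · rwa [Function.update_self]
      · rw [Function.update_of_ne hne]; exact ha j
    exact ⟨Function.update a i b, ⟨fun j => (hy j).1, sum_mem_minimizers_infConv hK hψ hy,
      infConv_sum_minimizers hK hψ hy⟩, Function.update_self i b a⟩

lemma dimAff_cell_infConv_le :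
    dimAff (cell (∑ i, Λ i) (infConv Λ ψ) v) ≤
      ∑ i, dimAff (comp Λ ψ (cell (∑ i, Λ i) (infConv Λ ψ) v) i) := by
  simp only [comp_cell_infConv hK hψ ha]
  rw [cell_infConv_eq_minimizers hK hψ ha, minimizers_infConv_eq_sum hK hψ ha]
  exact dimAff_sum_le _ _

end Compact

lemma comp_subset_comp {Λ' : Fin s → Set (Fin n → ℝ)} {C' C : Set (Fin n → ℝ)}
    (hΛ : ∀ i, Λ' i ⊆ Λ i) (hC : C' ⊆ C) (heq : ∀ x ∈ C', infConv Λ' ψ x = infConv Λ ψ x)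
    (i : Fin s) : comp Λ' ψ C' i ⊆ comp Λ ψ C i := by
  rintro _ ⟨y, ⟨hy, hyC, hopt⟩, rfl⟩
  exact ⟨y, ⟨fun j => hΛ j (hy j), hC hyC, (heq _ hyC).symm.trans hopt⟩, rfl⟩

end InfConv

section ConvexAnalysis

open Filter Topology

variable {E : Type*} [NormedAddCommGroup E] [NormedSpace ℝ E] {S : Set E} {f : E → ℝ} {x₀ : E}

lemma ConvexOn.exists_separation_epigraph [FiniteDimensional ℝ E] (hf : ConvexOn ℝ S f)
    (hx₀ : x₀ ∈ interior S) :
    ∃ F : StrongDual ℝ (E × ℝ), F (0, 1) < 0 ∧ ∀ y ∈ S, F (y, f y) ≤ F (x₀, f x₀) := by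
  set epi : Set (E × ℝ) := {p | p.1 ∈ S ∧ f p.1 ≤ p.2}
  have hepi : Convex ℝ epi := hf.convex_epigraph
  have hcont : ContinuousAt f x₀ :=
    hf.continuousOn_interior.continuousAt (isOpen_interior.mem_nhds hx₀)
  have hU : {x | x ∈ S ∧ f x < f x₀ + 1} ∈ 𝓝 x₀ :=
    inter_mem (mem_interior_iff_mem_nhds.mp hx₀) (hcont.eventually (gt_mem_nhds (by linarith)))
  have hint : (x₀, f x₀ + 2) ∈ interior epi := by
    refine mem_interior_iff_mem_nhds.mpr (mem_of_superset
      (prod_mem_nhds hU (Ioi_mem_nhds (show f x₀ + 1 < f x₀ + 2 by linarith))) ?_)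
    rintro ⟨x, z⟩ ⟨⟨hx, hfx⟩, hz⟩
    exact ⟨hx, (hfx.trans hz).le⟩
  have hbdry : (x₀, f x₀) ∉ interior epi := by
    intro h
    obtain ⟨t, ht, hmem⟩ := Filter.Eventually.exists_lt
      ((isOpen_interior.preimage (Continuous.prodMk_right x₀)).mem_nhds h)
    exact ht.not_ge (interior_subset hmem).2
  obtain ⟨F, hF⟩ := geometric_hahn_banach_open_point hepi.interior isOpen_interior hbdry
  have hFle : closure (interior epi) ⊆ {p | F p ≤ F (x₀, f x₀)} :=
    closure_minimal (fun p hp => (hF p hp).le) (isClosed_le F.continuous continuous_const)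
  rw [hepi.closure_interior_eq_closure_of_nonempty_interior ⟨_, hint⟩] at hFle
  refine ⟨F, ?_, fun y hy => hFle (subset_closure ⟨hy, le_rfl⟩)⟩
  have hvert := hF _ hint
  rw [show ((x₀, f x₀ + 2) : E × ℝ) = (x₀, f x₀) + (2 : ℝ) • (0, 1) by simp, map_add,
    map_smul, smul_eq_mul] at hvert
  linarith

lemma ConvexOn.exists_subgradient_of_mem_interior [FiniteDimensional ℝ E]
    (hf : ConvexOn ℝ S f) (hx₀ : x₀ ∈ interior S) :
    ∃ ℓ : StrongDual ℝ E, ∀ y ∈ S, f x₀ + ℓ (y - x₀) ≤ f y := by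
  obtain ⟨F, hc, hF⟩ := hf.exists_separation_epigraph hx₀
  have hsplit : ∀ x z, F (x, z) = F (x, 0) + z * F (0, 1) := fun x z => by
    rw [← smul_eq_mul, ← map_smul, ← map_add, Prod.smul_mk, smul_zero, smul_eq_mul, mul_one,
      Prod.mk_add_mk, add_zero, zero_add]
  refine ⟨(-F (0, 1))⁻¹ • F.comp (ContinuousLinearMap.inl ℝ E ℝ), fun y hy => ?_⟩
  have hy' := hF y hy
  rw [hsplit y, hsplit x₀] at hy'
  have hdiv : (-F (0, 1))⁻¹ * (F (y, 0) - F (x₀, 0)) ≤ f y - f x₀ := by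
    rw [inv_mul_le_iff₀ (by linarith)]
    linarith
  show f x₀ + (-F (0, 1))⁻¹ • F (y - x₀, 0) ≤ f y
  rw [show ((y - x₀, 0) : E × ℝ) = (y, 0) - (x₀, 0) by simp, map_sub, smul_eq_mul]
  linarith

lemma LinearMap.eq_zero_of_isMinOn_of_mem_interior (ℓ : E →ₗ[ℝ] ℝ) {T : Set E} {x : E}
    (hx : x ∈ interior T) (hmin : IsMinOn ℓ T x) : ℓ = 0 := by
  ext d
  have hline : Tendsto (fun t : ℝ => x + t • d) (𝓝 0) (𝓝 x) := by
    simpa using ((continuous_id.smul continuous_const).const_add x).tendsto (0 : ℝ)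
  have hloc : IsLocalMin (fun t : ℝ => ℓ x + t * ℓ d) 0 := by
    filter_upwards [hline (mem_interior_iff_mem_nhds.mp hx)] with t ht
    simpa using hmin ht
  simpa using hloc.hasDerivAt_eq_zero (((hasDerivAt_id 0).mul_const (ℓ d)).const_add (ℓ x))

lemma LowerSemicontinuousOn.le_of_le_on_interior {g : E → ℝ} (hg : LowerSemicontinuousOn g S)
    (hf : ConvexOn ℝ S f) (hS : (interior S).Nonempty) (hle : ∀ x ∈ interior S, g x ≤ f x) :
    ∀ x ∈ S, g x ≤ f x := by
  obtain ⟨x₀, hx₀⟩ := hS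
  intro x hx
  by_contra! hlt
  let p : ℝ → E := fun t => (1 - t) • x + t • x₀
  have hseg : ∀ t ∈ Set.Ioc (0 : ℝ) 1, p t ∈ interior S := fun t ht =>
    hf.1.combo_self_interior_mem_interior hx hx₀ (by linarith [ht.2]) ht.1 (by ring)
  have hp : Tendsto p (𝓝[>] 0) (𝓝[S] x) := by
    refine tendsto_nhdsWithin_iff.mpr ⟨?_, ?_⟩
    · have : Continuous p := by fun_prop
      simpa [p] using this.continuousAt.tendsto.mono_left (nhdsWithin_le_nhds (a := (0 : ℝ)))
    · filter_upwards [Ioc_mem_nhdsGT one_pos] with t ht using interior_subset (hseg t ht)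
  have hchord : Tendsto (fun t : ℝ => (1 - t) * f x + t * f x₀) (𝓝[>] 0) (𝓝 (f x)) := by
    have : Continuous (fun t : ℝ => (1 - t) * f x + t * f x₀) := by fun_prop
    simpa using this.continuousAt.tendsto.mono_left (nhdsWithin_le_nhds (a := (0 : ℝ)))
  obtain ⟨t, hgt, hchord_lt, ht⟩ :=
    ((hp.eventually (hg x hx ((f x + g x) / 2) (by linarith))).and
      ((hchord.eventually (gt_mem_nhds (show f x < (f x + g x) / 2 by linarith))).and
        (Ioc_mem_nhdsGT one_pos))).exists
  have hconv := hf.2 hx (interior_subset hx₀) (show 0 ≤ 1 - t by linarith [ht.2]) ht.1.le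
    (by ring)
  simp only [smul_eq_mul] at hconv
  linarith [hle _ (hseg t ht)]

end ConvexAnalysis

section Faces

variable {n : ℕ}

lemma exists_mem_minimizers_of_mem_interior {S : Set (Fin n → ℝ)} {f : (Fin n → ℝ) → ℝ}
    {x₀ : Fin n → ℝ} (hf : ConvexOn ℝ S f) (hx₀ : x₀ ∈ interior S) :
    ∃ v, x₀ ∈ minimizers S f v := by
  obtain ⟨ℓ, hℓ⟩ := hf.exists_subgradient_of_mem_interior hx₀
  set v : Fin n → ℝ := fun i => ℓ fun j => if i = j then 1 else 0
  have hdot : ∀ x, dot v x = ℓ x := fun x => by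
    rw [show ℓ x = (ℓ : (Fin n → ℝ) →ₗ[ℝ] ℝ) x from rfl, LinearMap.pi_apply_eq_sum_univ]
    simp only [dot, smul_eq_mul, mul_comm]
    rfl
  have hneg : ∀ x, dot (-v) x = -ℓ x := fun x => by
    rw [dot_eq_dotProduct, neg_dotProduct, ← dot_eq_dotProduct, hdot]
  refine ⟨-v, interior_subset hx₀, fun y hy => ?_⟩
  have := hℓ y hy
  rw [map_sub] at this
  rw [hneg, hneg]
  linarith

lemma minimizers_value_eq {Λ : Set (Fin n → ℝ)} {ψ : (Fin n → ℝ) → ℝ} {v x y : Fin n → ℝ}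
    (hx : x ∈ minimizers Λ ψ v) (hy : y ∈ minimizers Λ ψ v) :
    dot v x + ψ x = dot v y + ψ y :=
  le_antisymm (hx.2 y hy.1) (hy.2 x hx.1)

lemma subset_minimizers_of_mem_interior {S T : Set (Fin n → ℝ)} {f : (Fin n → ℝ) → ℝ}
    {v v' x₁ : Fin n → ℝ} (hTS : T ⊆ S) (hx₁ : x₁ ∈ interior T)
    (hconst : ∀ u ∈ T, dot v u + f u = dot v x₁ + f x₁) (hmin : x₁ ∈ minimizers S f v') :
    T ⊆ minimizers S f v' := by
  have hzero := (dotProductBilin ℝ ℝ (v' - v)).eq_zero_of_isMinOn_of_mem_interior hx₁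
    (isMinOn_iff.mpr fun u hu => by
      show (v' - v) ⬝ᵥ x₁ ≤ (v' - v) ⬝ᵥ u
      simp only [sub_dotProduct, ← dot_eq_dotProduct]
      linarith [hconst u hu, hmin.2 u (hTS hu)])
  have hvanish : ∀ u, dot v' u = dot v u := fun u => by
    have : (v' - v) ⬝ᵥ u = 0 := LinearMap.congr_fun hzero u
    rwa [sub_dotProduct, sub_eq_zero] at this
  intro u hu
  refine ⟨hTS hu, fun z hz => ?_⟩
  linarith [hconst u hu, hmin.2 z hz, hvanish u, hvanish x₁]

end Faces

section Refinement

variable {n s : ℕ} {Λ : Fin s → Set (Fin n → ℝ)} {ρ φ : Fin s → (Fin n → ℝ) → ℝ}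
  {w : Fin n → ℝ}
  (hK : ∀ i, IsCompact (Λ i)) (hne : ∀ i, (Λ i).Nonempty)
  (hρ : ∀ i, ContinuousOn (ρ i) (Λ i)) (hρv : ∀ i, ConvexOn ℝ (Λ i) (ρ i))
  (hφ : ∀ i, ContinuousOn (φ i) (Λ i))
  (hcomp : ∀ v, ∃ w', ∀ i, comp Λ ρ (cell (∑ i, Λ i) (infConv Λ ρ) v) i ⊆
    comp Λ φ (cell (∑ i, Λ i) (infConv Λ φ) w') i)
include hK hne hρ hρv hφ hcomp

lemma exists_optimal_tuple_mem_minimizers {x : Fin n → ℝ}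
    (hxD : x ∈ minimizers (∑ i, Λ i) (infConv Λ φ) w) (hx : x ∈ interior (∑ i, Λ i)) :
    ∃ y : Fin s → Fin n → ℝ, (∀ i, y i ∈ minimizers (Λ i) (φ i) w) ∧ ∑ i, y i = x ∧
      ∑ i, ρ i (y i) = infConv Λ ρ x := by
  obtain ⟨v, hv⟩ := exists_mem_minimizers_of_mem_interior (convexOn_infConv hK hρ hρv) hx
  obtain ⟨w', hw'⟩ := hcomp v
  obtain ⟨y, hy, hsum, hval⟩ := exists_sum_eq_infConv hK hρ hv.1
  choose a ha using fun i => minimizers_nonempty (hK i) (hne i) (hφ i) w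
  choose a' ha' using fun i => minimizers_nonempty (hK i) (hne i) (hφ i) w'
  have hyw' : ∀ i, y i ∈ minimizers (Λ i) (φ i) w' := fun i => by
    rw [← comp_cell_infConv hK hφ ha' i]
    refine hw' i ⟨y, ⟨hy, ?_, ?_⟩, rfl⟩
    · rw [hsum, cell_eq_minimizers ⟨x, hv⟩]
      exact hv
    · rw [hsum, hval]
  refine ⟨y, mem_minimizers_of_infConv_eq hK hφ ha hxD hy hsum ?_, hsum, hval⟩
  rw [← hsum]
  exact infConv_sum_minimizers hK hφ hyw'

variable (hφv : ∀ i, ConvexOn ℝ (Λ i) (φ i))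
  (hD : (interior (minimizers (∑ i, Λ i) (infConv Λ φ) w)).Nonempty)
include hφv hD

lemma infConv_minimizers_eq : ∀ x ∈ minimizers (∑ i, Λ i) (infConv Λ φ) w,
    infConv (fun i => minimizers (Λ i) (φ i) w) ρ x = infConv Λ ρ x := by
  intro x hx
  have hDK : ∀ i, IsCompact (minimizers (Λ i) (φ i) w) :=
    fun i => isCompact_minimizers (hK i) (hφ i) w
  have hDρ : ∀ i, ContinuousOn (ρ i) (minimizers (Λ i) (φ i) w) :=
    fun i => (hρ i).mono (minimizers_subset w)
  choose a ha using fun i => minimizers_nonempty (hK i) (hne i) (hφ i) w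
  have hDsum := minimizers_infConv_eq_sum hK hφ ha
  have hDΔ : minimizers (∑ i, Λ i) (infConv Λ φ) w ⊆ ∑ i, Λ i := minimizers_subset w
  refine le_antisymm ?_ ?_
  · refine LowerSemicontinuousOn.le_of_le_on_interior
      (hDsum ▸ lowerSemicontinuousOn_infConv hDK hDρ)
      ((convexOn_infConv hK hρ hρv).subset hDΔ
        (convex_minimizers (convexOn_infConv hK hφ hφv) w)) hD (fun x' hx' => ?_) x hx
    obtain ⟨y, hy, hsum, hval⟩ := exists_optimal_tuple_mem_minimizers hK hne hρ hρv hφ hcomp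
      (interior_subset hx') (interior_mono hDΔ hx')
    rw [← hval, ← hsum]
    exact infConv_le_sum hDK hDρ hy
  · obtain ⟨y, hy, rfl, hval⟩ := exists_sum_eq_infConv hDK hDρ (hDsum ▸ hx)
    rw [← hval]
    exact infConv_le_sum hK hρ fun i => minimizers_subset w (hy i)

lemma sum_dimAff_comp_minimizers_eq
    (htight : ∀ v, dimAff (cell (∑ i, Λ i) (infConv Λ ρ) v) = n →
      ∑ i, dimAff (comp Λ ρ (cell (∑ i, Λ i) (infConv Λ ρ) v) i) = n)
    {v : Fin n → ℝ} (hdim : dimAff (cell (∑ i, minimizers (Λ i) (φ i) w)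
      (infConv (fun i => minimizers (Λ i) (φ i) w) ρ) v) = n) :
    ∑ i, dimAff (comp (fun i => minimizers (Λ i) (φ i) w) ρ (cell (∑ i, minimizers (Λ i) (φ i) w)
      (infConv (fun i => minimizers (Λ i) (φ i) w) ρ) v) i) = n := by
  have hDK : ∀ i, IsCompact (minimizers (Λ i) (φ i) w) :=
    fun i => isCompact_minimizers (hK i) (hφ i) w
  have hDρ : ∀ i, ContinuousOn (ρ i) (minimizers (Λ i) (φ i) w) :=
    fun i => (hρ i).mono (minimizers_subset w)
  have hDρv : ∀ i, ConvexOn ℝ (minimizers (Λ i) (φ i) w) (ρ i) := fun i =>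
    (hρv i).subset (minimizers_subset w) (convex_minimizers (hφv i) w)
  choose a ha using fun i => minimizers_nonempty (hK i) (hne i) (hφ i) w
  choose b hb using fun i => minimizers_nonempty (hDK i) ⟨a i, ha i⟩ (hDρ i) v
  have hDΔ : minimizers (∑ i, Λ i) (infConv Λ φ) w ⊆ ∑ i, Λ i := minimizers_subset w
  set C := cell (∑ i, minimizers (Λ i) (φ i) w) (infConv (fun i => minimizers (Λ i) (φ i) w) ρ) v
  have hC : C = minimizers (∑ i, minimizers (Λ i) (φ i) w)
      (infConv (fun i => minimizers (Λ i) (φ i) w) ρ) v :=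
    cell_infConv_eq_minimizers hDK hDρ hb
  have hCD : C ⊆ minimizers (∑ i, Λ i) (infConv Λ φ) w := by
    rw [hC, minimizers_infConv_eq_sum hK hφ ha]
    exact minimizers_subset v
  have hCconv : Convex ℝ C := hC ▸ convex_minimizers (convexOn_infConv hDK hDρ hDρv) v
  obtain ⟨x₁, hx₁⟩ := interior_nonempty_of_dimAff_eq hCconv
    ⟨_, hC ▸ sum_mem_minimizers_infConv hDK hDρ hb⟩ hdim
  have hρD := infConv_minimizers_eq hK hne hρ hρv hφ hcomp hφv hD
  obtain ⟨v', hv'⟩ := exists_mem_minimizers_of_mem_interior (convexOn_infConv hK hρ hρv)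
    (interior_mono (hCD.trans hDΔ) hx₁)
  have hCC' : C ⊆ minimizers (∑ i, Λ i) (infConv Λ ρ) v' := by
    refine subset_minimizers_of_mem_interior (v := v) (hCD.trans hDΔ) hx₁ (fun u hu => ?_) hv'
    rw [← hρD u (hCD hu), ← hρD x₁ (hCD (interior_subset hx₁))]
    exact minimizers_value_eq (hC ▸ hu) (hC ▸ interior_subset hx₁)
  rw [← cell_eq_minimizers ⟨x₁, hv'⟩] at hCC'
  refine le_antisymm ?_ (hdim.symm.trans_le (dimAff_cell_infConv_le hDK hDρ hb))
  calc ∑ i, dimAff (comp (fun i => minimizers (Λ i) (φ i) w) ρ C i)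
      ≤ ∑ i, dimAff (comp Λ ρ (cell (∑ i, Λ i) (infConv Λ ρ) v') i) :=
        Finset.sum_le_sum fun i _ => dimAff_mono (comp_subset_comp (fun j => minimizers_subset w)
          hCC' (fun x hx => hρD x (hCD hx)) i)
    _ = n := htight v' (le_antisymm (dimAff_le _) (hdim.symm.trans_le (dimAff_mono hCC')))

end Refinement

/-- Let `ρ_i` be convex piecewise affine functions on polytopes `Λ_i` whose mixed
subdivision `S(ρ)` is tight, and `φ_i` further such functions with `S(φ) ⪯ S(ρ)`.
For every `n`-cell `D` of `S(φ)` with components `D_i`: (a) the inf-convolution of the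
restrictions `ρ_i|_{D_i}` agrees with `ρ` on `D`; (b) the mixed subdivision of `D`
induced by the `ρ_i|_{D_i}` is tight. -/
theorem stmt16 {n : ℕ} (Λ : Fin (n + 1) → Set (Fin n → ℝ))
    (hΛ : ∀ i, ∃ F : Finset (Fin n → ℝ), Λ i = convexHull ℝ (↑F : Set (Fin n → ℝ)))
    (ρs φs : Fin (n + 1) → (Fin n → ℝ) → ℝ)
    (hρ : ∀ i, IsCPA (Λ i) (ρs i)) (hφ : ∀ i, IsCPA (Λ i) (φs i))
    (htight : ∀ v, dimAff (cell (∑ i, Λ i) (infConv Λ ρs) v) = n →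
      (∑ i, dimAff (comp Λ ρs (cell (∑ i, Λ i) (infConv Λ ρs) v) i)) = n)
    (hrefines : ∀ v, ∃ w,
      cell (∑ i, Λ i) (infConv Λ ρs) v ⊆ cell (∑ i, Λ i) (infConv Λ φs) w ∧
      ∀ i, comp Λ ρs (cell (∑ i, Λ i) (infConv Λ ρs) v) i
          ⊆ comp Λ φs (cell (∑ i, Λ i) (infConv Λ φs) w) i)
    (w : Fin n → ℝ)
    (hD : dimAff (cell (∑ i, Λ i) (infConv Λ φs) w) = n) :
    (∀ x ∈ cell (∑ i, Λ i) (infConv Λ φs) w,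
      infConv (fun i => comp Λ φs (cell (∑ i, Λ i) (infConv Λ φs) w) i) ρs x
        = infConv Λ ρs x) ∧
    (∀ v, dimAff (cell (∑ i, comp Λ φs (cell (∑ i, Λ i) (infConv Λ φs) w) i)
          (infConv (fun i => comp Λ φs (cell (∑ i, Λ i) (infConv Λ φs) w) i) ρs) v) = n →
      (∑ i, dimAff
        (comp (fun i => comp Λ φs (cell (∑ i, Λ i) (infConv Λ φs) w) i) ρs
          (cell (∑ i, comp Λ φs (cell (∑ i, Λ i) (infConv Λ φs) w) i)
            (infConv (fun i => comp Λ φs (cell (∑ i, Λ i) (infConv Λ φs) w) i) ρs) v)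
          i)) = n) := by
  obtain ⟨hK, hconv⟩ : (∀ i, IsCompact (Λ i)) ∧ ∀ i, Convex ℝ (Λ i) := forall_and.mp fun i => by
    obtain ⟨F, hF⟩ := hΛ i
    rw [hF]
    exact ⟨F.finite_toSet.isCompact_convexHull ℝ, convex_convexHull ℝ _⟩
  rcases (cell (∑ i, Λ i) (infConv Λ φs) w).eq_empty_or_nonempty with hempty | ⟨x, hx⟩
  · rw [hempty] at hD
    obtain rfl : n = 0 := by
      rw [← hD, dimAff, AffineSubspace.span_empty, AffineSubspace.direction_bot, finrank_bot]
    refine ⟨by simp only [hempty, Set.mem_empty_iff_false, false_imp_iff, implies_true],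
      fun v _ => Finset.sum_eq_zero fun i _ => Nat.le_zero.mp (dimAff_le _)⟩
  obtain ⟨y, hy, -⟩ := (Set.mem_fintype_sum _ _).mp (cell_subset _ _ _ hx)
  have hne : ∀ i, (Λ i).Nonempty := fun i => ⟨y i, hy i⟩
  have hρc := fun i => (hρ i).continuousOn
  have hρv := fun i => (hρ i).convexOn (hconv i)
  have hφc := fun i => (hφ i).continuousOn
  have hφv := fun i => (hφ i).convexOn (hconv i)
  choose a ha using fun i => minimizers_nonempty (hK i) (hne i) (hφc i) w
  simp only [comp_cell_infConv hK hφc ha]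
  rw [cell_infConv_eq_minimizers hK hφc ha] at hD ⊢
  have hDint := interior_nonempty_of_dimAff_eq (convex_minimizers (convexOn_infConv hK hφc hφv) w)
    ⟨_, sum_mem_minimizers_infConv hK hφc ha⟩ hD
  have hcomp := fun v => (hrefines v).imp fun _ h => h.2
  exact ⟨infConv_minimizers_eq hK hne hρc hρv hφc hcomp hφv hDint,
    fun v => sum_dimAff_comp_minimizers_eq hK hne hρc hρv hφc hcomp hφv hDint htight⟩
end
end
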